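/- arXiv:1407.0412 — 6 statements merged into one kernel-verified Lean document; each statement's English description precedes it below -/
import Mathlib

section
/- Let μ be a Borel probability measure on ℝ^d, let z ∈ ℝ^d, ε > 0 and y ∈ ℝ. Assume μ(B_∞(z,ε)) > 0 and μ({x : ‖x−z‖_∞ = ε}) = 0. Let θ be the uniform (normalized Lebesgue) probability measure on the hypercube [−1,1]^d, and for each n ≥ 1 set u_n = y/d + (1/d)·log( n·K_d·μ(B_∞(z,ε)) / (2ε)^d ). Then lim_{n→∞} n·∫_{ℝ^d} θ({ ξ ∈ [−1,1]^d : ‖x + ε·ξ − z‖ < e^{−u_n} }) dμ(x) = e^{−y}. (The integral equals ℙ(X_0 > u_n) for the observational-noise process X_n(x,ξ̄) = −log‖f^n(x) + ε·ξ_n − z‖ under ℙ = μ × θ^ℕ, so this identifies the affine normalizing sequence a_n = d, b_n = (1/d)·log(n·K_d·μ(B_∞(z,ε))/(2ε)^d) for observational noise.) -/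
open MeasureTheory Filter Set
open scoped ENNReal NNReal

private lemma coord_abs_le_norm {d : ℕ} (v : EuclideanSpace ℝ (Fin d)) (i : Fin d) :
    |v i| ≤ ‖v‖ := by
  rw [EuclideanSpace.norm_eq, ← Real.sqrt_sq_eq_abs]
  apply Real.sqrt_le_sqrt
  have := Finset.single_le_sum (f := fun j => ‖v j‖ ^ 2)
    (fun j _ => sq_nonneg _) (Finset.mem_univ i)
  simpa [Real.norm_eq_abs, sq_abs] using this

/-- Observational noise: normalizing levels for the EVL.
`μ` is a Borel probability measure on `ℝ^d`, `θ` is the uniform probability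
measure on the hypercube `[-1,1]^d`, `Kd` is the Lebesgue volume of the
Euclidean unit ball, and `‖(fun i => x i - z i : Fin d → ℝ)‖` is the sup norm
`‖x - z‖_∞`.  With `u n = y/d + (1/d) log (n Kd μ(B_∞(z,ε)) / (2ε)^d)`, we have
`n ℙ(X_0 > u_n) = n ∫ θ {ξ : ‖x + ε ξ - z‖ < e^{-u_n}} dμ(x) → e^{-y}`. -/
theorem observational_noise_levels
    (d : ℕ) (hd : 0 < d)
    (μ : Measure (EuclideanSpace ℝ (Fin d))) [IsProbabilityMeasure μ]
    (z : EuclideanSpace ℝ (Fin d)) (ε y : ℝ) (hε : 0 < ε)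
    (hpos : 0 < μ {x | ‖(fun i => x i - z i : Fin d → ℝ)‖ < ε})
    (hnull : μ {x | ‖(fun i => x i - z i : Fin d → ℝ)‖ = ε} = 0)
    (θ : Measure (EuclideanSpace ℝ (Fin d)))
    (hθ : θ = ((2 : ℝ≥0∞) ^ d)⁻¹
        • (volume : Measure (EuclideanSpace ℝ (Fin d))).restrict
            {ξ | ∀ i, |ξ i| ≤ 1})
    (Kd : ℝ)
    (hK : Kd = ((volume : Measure (EuclideanSpace ℝ (Fin d)))
        (Metric.ball (0 : EuclideanSpace ℝ (Fin d)) 1)).toReal)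
    (u : ℕ → ℝ)
    (hu : ∀ n : ℕ, u n = y / d + (1 / d) *
        Real.log (n * Kd *
          (μ {x | ‖(fun i => x i - z i : Fin d → ℝ)‖ < ε}).toReal / (2 * ε) ^ d)) :
    Tendsto
      (fun n : ℕ => (n : ℝ) *
        ∫ x, (θ {ξ | (∀ i, |ξ i| ≤ 1) ∧ ‖x + ε • ξ - z‖ < Real.exp (-(u n))}).toReal ∂μ)
      atTop (nhds (Real.exp (-y))) := by
  classical
  haveI : NeZero d := ⟨hd.ne'⟩
  have hd' : (0 : ℝ) < d := by exact_mod_cast hd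
  -- abbreviations
  set B : Set (EuclideanSpace ℝ (Fin d)) :=
    {x | ‖(fun i => x i - z i : Fin d → ℝ)‖ < ε} with hBdef
  set Q : Set (EuclideanSpace ℝ (Fin d)) := {ξ | ∀ i, |ξ i| ≤ 1} with hQdef
  set KE : ℝ≥0∞ := volume (Metric.ball (0 : EuclideanSpace ℝ (Fin d)) 1) with hKEdef
  set m : ℝ := (μ B).toReal with hmdef
  set r : ℕ → ℝ := fun n => Real.exp (-(u n)) with hrdef
  set S : ℕ → EuclideanSpace ℝ (Fin d) → Set (EuclideanSpace ℝ (Fin d)) :=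
    fun n x => {ξ | (∀ i, |ξ i| ≤ 1) ∧ ‖x + ε • ξ - z‖ < r n} with hSdef
  set C : ℝ := Real.exp (-y) / m with hCdef
  have hm : 0 < m := ENNReal.toReal_pos hpos.ne' (measure_ne_top μ B)
  have hKE0 : KE ≠ 0 := (Metric.measure_ball_pos volume 0 one_pos).ne'
  have hKEtop : KE ≠ ∞ := measure_ball_lt_top.ne
  have hKd : 0 < Kd := by rw [hK]; exact ENNReal.toReal_pos hKE0 hKEtop
  have hC : 0 < C := div_pos (Real.exp_pos _) hm
  have hr_pos : ∀ n, 0 < r n := fun n => Real.exp_pos _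
  have h2ε : (0 : ℝ) < (2 * ε) ^ d := by positivity
  -- key algebraic identity
  have key : ∀ n : ℕ, 1 ≤ n → (n : ℝ) * (Kd * r n ^ d / (2 * ε) ^ d) = C := by
    intro n hn
    have hn' : (0 : ℝ) < n := by exact_mod_cast hn
    have hA : (0 : ℝ) < (n : ℝ) * Kd * m / (2 * ε) ^ d := by positivity
    have hdu : (d : ℝ) * u n = y + Real.log ((n : ℝ) * Kd * m / (2 * ε) ^ d) := by
      rw [hu n]; field_simp
    have hrd : r n ^ d = Real.exp (-y) * ((n : ℝ) * Kd * m / (2 * ε) ^ d)⁻¹ := by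
      rw [show r n = Real.exp (-(u n)) from rfl, ← Real.exp_nat_mul, mul_neg, hdu,
        neg_add, Real.exp_add, Real.exp_neg (Real.log _), Real.exp_log hA]
    rw [hrd, hCdef]
    field_simp
  -- geometry of the set `S n x`
  have hnorm : ∀ (x ξ : EuclideanSpace ℝ (Fin d)),
      ‖x + ε • ξ - z‖ = ε * ‖ξ - ε⁻¹ • (z - x)‖ := by
    intro x ξ
    have h1 : x + ε • ξ - z = ε • (ξ - ε⁻¹ • (z - x)) := by
      rw [smul_sub, smul_inv_smul₀ hε.ne']; abel
    rw [h1, norm_smul, Real.norm_eq_abs, abs_of_pos hε]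
  have hset : ∀ n x, S n x = Q ∩ Metric.ball (ε⁻¹ • (z - x)) (r n / ε) := by
    intro n x
    ext ξ
    simp only [hSdef, hQdef, Set.mem_setOf_eq, Set.mem_inter_iff, Metric.mem_ball,
      dist_eq_norm, hnorm x ξ, lt_div_iff₀ hε]
    constructor
    · rintro ⟨h1, h2⟩; exact ⟨h1, by linarith⟩
    · rintro ⟨h1, h2⟩; exact ⟨h1, by linarith⟩
  have hQclosed : IsClosed Q := by
    have : Q = ⋂ i, {ξ : EuclideanSpace ℝ (Fin d) | |ξ i| ≤ 1} := by
      ext ξ; simp [hQdef]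
    rw [this]
    exact isClosed_iInter fun i =>
      isClosed_le (continuous_abs.comp (EuclideanSpace.proj i).continuous) continuous_const
  have hQmeas : MeasurableSet Q := hQclosed.measurableSet
  -- volume of euclidean balls
  have hball : ∀ (c : EuclideanSpace ℝ (Fin d)) (ρ : ℝ), 0 ≤ ρ →
      volume (Metric.ball c ρ) = ENNReal.ofReal (ρ ^ d) * KE := by
    intro c ρ hρ
    rw [Measure.addHaar_ball _ _ hρ, finrank_euclideanSpace_fin, hKEdef]
  -- toReal of the model value
  have hVcalc : ∀ n : ℕ,
      ((((2 : ℝ≥0∞) ^ d)⁻¹) * (ENNReal.ofReal ((r n / ε) ^ d) * KE)).toReal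
        = Kd * r n ^ d / (2 * ε) ^ d := by
    intro n
    rw [ENNReal.toReal_mul, ENNReal.toReal_mul, ENNReal.toReal_inv, ENNReal.toReal_pow,
      ENNReal.toReal_ofReal (by positivity), ← hK]
    norm_num
    rw [div_pow, mul_pow]
    field_simp
  have hVtop : ∀ n : ℕ,
      (((2 : ℝ≥0∞) ^ d)⁻¹) * (ENNReal.ofReal ((r n / ε) ^ d) * KE) ≠ ∞ :=
    fun n => ENNReal.mul_ne_top (ENNReal.inv_ne_top.2 (by simp))
      (ENNReal.mul_ne_top ENNReal.ofReal_ne_top hKEtop)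
  -- upper bound
  have hub : ∀ n x, (θ (S n x)).toReal ≤ Kd * r n ^ d / (2 * ε) ^ d := by
    intro n x
    have hle : θ (S n x) ≤ (((2 : ℝ≥0∞) ^ d)⁻¹) * (ENNReal.ofReal ((r n / ε) ^ d) * KE) := by
      rw [hθ]
      simp only [Measure.smul_apply, smul_eq_mul]
      refine mul_le_mul_right ?_ _
      calc (volume.restrict Q) (S n x) ≤ volume (S n x) := Measure.restrict_apply_le _ _
        _ ≤ volume (Metric.ball (ε⁻¹ • (z - x)) (r n / ε)) := by
            apply measure_mono; rw [hset n x]; exact Set.inter_subset_right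
        _ = ENNReal.ofReal ((r n / ε) ^ d) * KE := hball _ _ (by positivity)
    calc (θ (S n x)).toReal
        ≤ ((((2 : ℝ≥0∞) ^ d)⁻¹) * (ENNReal.ofReal ((r n / ε) ^ d) * KE)).toReal :=
          ENNReal.toReal_mono (hVtop n) hle
      _ = Kd * r n ^ d / (2 * ε) ^ d := hVcalc n
  -- exact value for x well inside the cube
  have heq : ∀ n x, x ∈ B → r n ≤ ε - ‖(fun i => x i - z i : Fin d → ℝ)‖ →
      (θ (S n x)).toReal = Kd * r n ^ d / (2 * ε) ^ d := by
    intro n x hxB hrn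
    have hw : ‖(fun i => x i - z i : Fin d → ℝ)‖ < ε := hxB
    have hw0 : 0 ≤ ‖(fun i => x i - z i : Fin d → ℝ)‖ := norm_nonneg _
    have hsub : Metric.ball (ε⁻¹ • (z - x)) (r n / ε) ⊆ Q := by
      intro ξ hξ
      rw [Metric.mem_ball, dist_eq_norm] at hξ
      intro i
      have hci : |(ε⁻¹ • (z - x) : EuclideanSpace ℝ (Fin d)) i|
          ≤ ‖(fun i => x i - z i : Fin d → ℝ)‖ / ε := by
        have h1 : ((ε⁻¹ • (z - x) : EuclideanSpace ℝ (Fin d)) i) = ε⁻¹ * (z i - x i) := by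
          simp [PiLp.smul_apply, PiLp.sub_apply, smul_eq_mul]
        have h2 : |z i - x i| ≤ ‖(fun i => x i - z i : Fin d → ℝ)‖ := by
          rw [abs_sub_comm]
          exact norm_le_pi_norm (fun i => x i - z i : Fin d → ℝ) i
        rw [h1, abs_mul, abs_of_pos (inv_pos.2 hε), inv_mul_eq_div, div_le_div_iff₀ hε hε]
        nlinarith
      have hdi : |ξ i - (ε⁻¹ • (z - x) : EuclideanSpace ℝ (Fin d)) i| < r n / ε := by
        have h3 := coord_abs_le_norm (ξ - ε⁻¹ • (z - x)) i
        have h4 : (ξ - ε⁻¹ • (z - x) : EuclideanSpace ℝ (Fin d)) i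
            = ξ i - (ε⁻¹ • (z - x) : EuclideanSpace ℝ (Fin d)) i := by
          simp [PiLp.sub_apply]
        rw [h4] at h3
        exact lt_of_le_of_lt h3 hξ
      have h5 : |ξ i| ≤ |(ε⁻¹ • (z - x) : EuclideanSpace ℝ (Fin d)) i|
          + |ξ i - (ε⁻¹ • (z - x) : EuclideanSpace ℝ (Fin d)) i| := by
        have := abs_add_le ((ε⁻¹ • (z - x) : EuclideanSpace ℝ (Fin d)) i)
          (ξ i - (ε⁻¹ • (z - x) : EuclideanSpace ℝ (Fin d)) i)
        simpa using this
      have h6 : r n / ε ≤ (ε - ‖(fun i => x i - z i : Fin d → ℝ)‖) / ε := by gcongr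
      have h7 : ‖(fun i => x i - z i : Fin d → ℝ)‖ / ε
          + (ε - ‖(fun i => x i - z i : Fin d → ℝ)‖) / ε = 1 := by field_simp; ring
      linarith
    have hSx : S n x = Metric.ball (ε⁻¹ • (z - x)) (r n / ε) := by
      rw [hset n x, Set.inter_eq_self_of_subset_right hsub]
    rw [hSx, hθ]
    simp only [Measure.smul_apply, smul_eq_mul]
    rw [Measure.restrict_apply' hQmeas, Set.inter_eq_self_of_subset_left hsub,
      hball _ _ (by positivity)]
    exact hVcalc n
  -- the set is empty for x outside the closed cube
  have hempty : ∀ n x, ε < ‖(fun i => x i - z i : Fin d → ℝ)‖ →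
      r n ≤ ‖(fun i => x i - z i : Fin d → ℝ)‖ - ε → S n x = ∅ := by
    intro n x hgt hrn
    ext ξ
    simp only [hSdef, Set.mem_setOf_eq, Set.mem_empty_iff_false, iff_false, not_and, not_lt]
    intro hξ
    obtain ⟨i, -, hi⟩ := Finset.exists_max_image Finset.univ
      (fun i => |x i - z i|) ⟨⟨0, hd⟩, Finset.mem_univ _⟩
    have hnle : ‖(fun i => x i - z i : Fin d → ℝ)‖ ≤ |x i - z i| := by
      apply pi_norm_le_iff_of_nonneg (abs_nonneg _) |>.2
      intro j
      simpa [Real.norm_eq_abs] using hi j (Finset.mem_univ _)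
    have h3 : |(x + ε • ξ - z : EuclideanSpace ℝ (Fin d)) i| ≤ ‖x + ε • ξ - z‖ :=
      coord_abs_le_norm _ i
    have h4 : (x + ε • ξ - z : EuclideanSpace ℝ (Fin d)) i = (x i - z i) + ε * ξ i := by
      simp [PiLp.add_apply, PiLp.sub_apply, PiLp.smul_apply, smul_eq_mul]
      ring
    have h5 : |x i - z i| - |ε * ξ i| ≤ |(x i - z i) + ε * ξ i| := by
      have := abs_sub_abs_le_abs_sub (x i - z i) (-(ε * ξ i))
      simpa [sub_neg_eq_add] using this
    have h6 : |ε * ξ i| ≤ ε := by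
      rw [abs_mul, abs_of_pos hε]
      calc ε * |ξ i| ≤ ε * 1 := by
            exact mul_le_mul_of_nonneg_left (hξ i) hε.le
        _ = ε := mul_one ε
    calc r n ≤ ‖(fun i => x i - z i : Fin d → ℝ)‖ - ε := hrn
      _ ≤ |x i - z i| - |ε * ξ i| := by linarith
      _ ≤ |(x i - z i) + ε * ξ i| := h5
      _ = |(x + ε • ξ - z : EuclideanSpace ℝ (Fin d)) i| := by rw [h4]
      _ ≤ ‖x + ε • ξ - z‖ := h3
  -- `r n → 0`
  have hu_top : Tendsto u atTop atTop := by
    have ha : (0 : ℝ) < Kd * m / (2 * ε) ^ d := by positivity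
    have h1 : Tendsto (fun n : ℕ => (n : ℝ) * (Kd * m / (2 * ε) ^ d)) atTop atTop :=
      (tendsto_natCast_atTop_atTop).atTop_mul_const ha
    have h2 : Tendsto (fun n : ℕ => Real.log ((n : ℝ) * (Kd * m / (2 * ε) ^ d)))
        atTop atTop := Real.tendsto_log_atTop.comp h1
    have h3 : Tendsto (fun n : ℕ =>
        y / d + (1 / d) * Real.log ((n : ℝ) * (Kd * m / (2 * ε) ^ d))) atTop atTop :=
      tendsto_atTop_add_const_left _ _ (h2.const_mul_atTop (by positivity))
    refine h3.congr fun n => ?_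
    rw [hu n]
    congr 2
    ring
  have hr0 : Tendsto r atTop (nhds 0) := by
    have := Real.tendsto_exp_atBot.comp (tendsto_neg_atTop_atBot.comp hu_top)
    exact this
  -- a.e. pointwise convergence
  have hae : ∀ᵐ x ∂μ, Tendsto (fun n : ℕ => (n : ℝ) * (θ (S n x)).toReal) atTop
      (nhds (B.indicator (fun _ => C) x)) := by
    have h1 : ∀ᵐ x ∂μ, ‖(fun i => x i - z i : Fin d → ℝ)‖ ≠ ε := by
      rw [ae_iff]
      simpa using hnull
    filter_upwards [h1] with x hx
    rcases lt_trichotomy ‖(fun i => x i - z i : Fin d → ℝ)‖ ε with hlt | he | hgt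
    · have hxB : x ∈ B := hlt
      rw [Set.indicator_of_mem hxB]
      have hδ : 0 < ε - ‖(fun i => x i - z i : Fin d → ℝ)‖ := sub_pos.2 hlt
      have hev : ∀ᶠ n : ℕ in atTop, (n : ℝ) * (θ (S n x)).toReal = C := by
        filter_upwards [hr0.eventually (gt_mem_nhds hδ), eventually_ge_atTop 1] with n hn1 hn2
        rw [heq n x hxB hn1.le, key n hn2]
      exact Tendsto.congr' (hev.mono fun n h => h.symm) tendsto_const_nhds
    · exact absurd he hx
    · have hxB : x ∉ B := by
        simp only [hBdef, Set.mem_setOf_eq, not_lt]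
        exact hgt.le
      rw [Set.indicator_of_notMem hxB]
      have hδ : 0 < ‖(fun i => x i - z i : Fin d → ℝ)‖ - ε := sub_pos.2 hgt
      have hev : ∀ᶠ n : ℕ in atTop, (n : ℝ) * (θ (S n x)).toReal = 0 := by
        filter_upwards [hr0.eventually (gt_mem_nhds hδ)] with n hn1
        rw [hempty n x hgt hn1.le]
        simp
      exact Tendsto.congr' (hev.mono fun n h => h.symm) tendsto_const_nhds
  -- measurability
  have hFmeas : ∀ n : ℕ,
      AEStronglyMeasurable (fun x => (n : ℝ) * (θ (S n x)).toReal) μ := by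
    intro n
    have hs : MeasurableSet {p : EuclideanSpace ℝ (Fin d) × EuclideanSpace ℝ (Fin d) |
        (∀ i, |p.2 i| ≤ 1) ∧ ‖p.1 + ε • p.2 - z‖ < r n} := by
      have h1 : MeasurableSet {p : EuclideanSpace ℝ (Fin d) × EuclideanSpace ℝ (Fin d) |
          ∀ i, |p.2 i| ≤ 1} := by
        have he : {p : EuclideanSpace ℝ (Fin d) × EuclideanSpace ℝ (Fin d) | ∀ i, |p.2 i| ≤ 1}
            = ⋂ i, {p : EuclideanSpace ℝ (Fin d) × EuclideanSpace ℝ (Fin d) | |p.2 i| ≤ 1} := by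
          ext p; simp
        rw [he]
        exact MeasurableSet.iInter fun i => measurableSet_le
          ((continuous_abs.comp
            ((EuclideanSpace.proj i).continuous.comp continuous_snd)).measurable)
          measurable_const
      have h2 : MeasurableSet {p : EuclideanSpace ℝ (Fin d) × EuclideanSpace ℝ (Fin d) |
          ‖p.1 + ε • p.2 - z‖ < r n} :=
        measurableSet_lt
          (((continuous_fst.add (continuous_snd.const_smul ε)).sub
            continuous_const).norm.measurable) measurable_const
      exact Set.setOf_and ▸ h1.inter h2
    have hmeas : Measurable fun x => θ (S n x) := by
      rw [hθ]
      simp only [Measure.smul_apply, smul_eq_mul]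
      exact (measurable_measure_prodMk_left (ν := volume.restrict Q) hs).const_mul _
    exact ((hmeas.ennreal_toReal).const_mul _).aestronglyMeasurable
  -- uniform bound
  have h_bound : ∀ n : ℕ, ∀ᵐ x ∂μ, ‖(n : ℝ) * (θ (S n x)).toReal‖ ≤ C := by
    intro n
    refine Filter.Eventually.of_forall fun x => ?_
    rw [Real.norm_eq_abs, abs_of_nonneg (by positivity)]
    rcases Nat.eq_zero_or_pos n with h0 | h1
    · simp only [h0, Nat.cast_zero, zero_mul]
      exact hC.le
    · calc (n : ℝ) * (θ (S n x)).toReal ≤ (n : ℝ) * (Kd * r n ^ d / (2 * ε) ^ d) :=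
          mul_le_mul_of_nonneg_left (hub n x) (Nat.cast_nonneg n)
        _ = C := key n h1
  -- dominated convergence
  have hDCT := tendsto_integral_of_dominated_convergence (μ := μ)
    (F := fun n x => (n : ℝ) * (θ (S n x)).toReal) (f := B.indicator fun _ => C)
    (bound := fun _ => C) hFmeas (integrable_const C) h_bound hae
  have hBmeas : MeasurableSet B := by
    have hcont : Continuous fun x : EuclideanSpace ℝ (Fin d) =>
        ‖(fun i => x i - z i : Fin d → ℝ)‖ :=
      (continuous_pi fun i => ((EuclideanSpace.proj i).continuous.sub continuous_const)).norm
    exact (isOpen_lt hcont continuous_const).measurableSet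
  have hint : ∫ x, B.indicator (fun _ => C) x ∂μ = Real.exp (-y) := by
    rw [integral_indicator_const _ hBmeas]
    simp only [smul_eq_mul, ← hmdef, hCdef]
    field_simp
    rfl
  rw [hint] at hDCT
  refine hDCT.congr fun n => ?_
  exact integral_const_mul _ _
end

section
/- Let f : ℝ^d → ℝ^d be Borel measurable, let μ_ε be a Borel probability measure on ℝ^d, let z ∈ ℝ^d, ε > 0 and y ∈ ℝ. Let θ_ε be the uniform (normalized Lebesgue) probability measure on the hypercube [−ε,ε]^d. Assume μ_ε(f^{−1}(B_∞(z,ε))) > 0 and μ_ε({x : ‖f(x)−z‖_∞ = ε}) = 0. For each n ≥ 1 set u_n = y/d + (1/d)·log( n·K_d·μ_ε(f^{−1}(B_∞(z,ε))) / (2ε)^d ). Then lim_{n→∞} n·∫_{ℝ^d} θ_ε({ ω ∈ [−ε,ε]^d : ‖f(x) + ω − z‖ < e^{−u_n} }) dμ_ε(x) = e^{−y}. (When μ_ε is the stationary measure of the additive-noise random system f_ω(x) = f(x) + ω, the integral equals ℙ(X_1 > u_n) = ℙ(X_0 > u_n) for the process X_n(x,ω̄) = −log‖f^n_ω̄(x)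 − z‖ under ℙ = μ_ε × θ_ε^ℕ, so this identifies the affine normalizing sequence a_n = d, b_n = (1/d)·log(n·K_d·μ_ε(f^{−1}(B_∞(z,ε)))/(2ε)^d) for additive noise.) -/
open MeasureTheory Filter Set
open scoped ENNReal NNReal

/-- Additive noise: normalizing levels for the EVL.
`μ_ε` is a Borel probability measure on `ℝ^d`, `θ_ε` the uniform probability
measure on `[-ε,ε]^d`, `Kd` the Lebesgue volume of the Euclidean unit ball, and
`‖(fun i => f x i - z i : Fin d → ℝ)‖` the sup norm `‖f x - z‖_∞`, so that
`{x | ‖f x - z‖_∞ < ε} = f⁻¹(B_∞(z,ε))`.  With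
`u n = y/d + (1/d) log (n Kd μ_ε(f⁻¹ B_∞(z,ε)) / (2ε)^d)`,
`n ∫ θ_ε {ω : ‖f x + ω - z‖ < e^{-u_n}} dμ_ε(x) → e^{-y}`. -/
theorem additive_noise_levels
    (d : ℕ) (hd : 0 < d)
    (f : EuclideanSpace ℝ (Fin d) → EuclideanSpace ℝ (Fin d)) (hf : Measurable f)
    (με : Measure (EuclideanSpace ℝ (Fin d))) [IsProbabilityMeasure με]
    (z : EuclideanSpace ℝ (Fin d)) (ε y : ℝ) (hε : 0 < ε)
    (hpos : 0 < με {x | ‖(fun i => f x i - z i : Fin d → ℝ)‖ < ε})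
    (hnull : με {x | ‖(fun i => f x i - z i : Fin d → ℝ)‖ = ε} = 0)
    (θε : Measure (EuclideanSpace ℝ (Fin d)))
    (hθ : θε = (ENNReal.ofReal ((2 * ε) ^ d))⁻¹
        • (volume : Measure (EuclideanSpace ℝ (Fin d))).restrict
            {ω | ∀ i, |ω i| ≤ ε})
    (Kd : ℝ)
    (hK : Kd = ((volume : Measure (EuclideanSpace ℝ (Fin d)))
        (Metric.ball (0 : EuclideanSpace ℝ (Fin d)) 1)).toReal)
    (u : ℕ → ℝ)
    (hu : ∀ n : ℕ, u n = y / d + (1 / d) *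
        Real.log (n * Kd *
          (με {x | ‖(fun i => f x i - z i : Fin d → ℝ)‖ < ε}).toReal / (2 * ε) ^ d)) :
    Tendsto
      (fun n : ℕ => (n : ℝ) *
        ∫ x, (θε {ω | (∀ i, |ω i| ≤ ε) ∧ ‖f x + ω - z‖ < Real.exp (-(u n))}).toReal ∂με)
      atTop (nhds (Real.exp (-y))) := by
  classical
  haveI : Nonempty (Fin d) := Fin.pos_iff_nonempty.mp hd
  have hdR : (0 : ℝ) < d := Nat.cast_pos.mpr hd
  -- notation
  set s : EuclideanSpace ℝ (Fin d) → ℝ :=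
    fun x => ‖(fun i => f x i - z i : Fin d → ℝ)‖ with hs
  set A : Set (EuclideanSpace ℝ (Fin d)) := {x | s x < ε} with hA
  set m : ℝ := (με A).toReal with hm
  have hm0 : 0 < m := ENNReal.toReal_pos hpos.ne' (measure_ne_top με A)
  -- constants
  have hKE0 : (volume : Measure (EuclideanSpace ℝ (Fin d)))
      (Metric.ball (0 : EuclideanSpace ℝ (Fin d)) 1) ≠ 0 :=
    (Metric.measure_ball_pos volume 0 one_pos).ne'
  have hKEtop : (volume : Measure (EuclideanSpace ℝ (Fin d)))
      (Metric.ball (0 : EuclideanSpace ℝ (Fin d)) 1) ≠ ⊤ := measure_ball_lt_top.ne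
  have hK0 : 0 < Kd := hK ▸ ENNReal.toReal_pos hKE0 hKEtop
  have h2ε : (0 : ℝ) < (2 * ε) ^ d := by positivity
  -- the radius
  set r : ℕ → ℝ := fun n => Real.exp (-(u n)) with hr
  have hrpos : ∀ n, 0 < r n := fun n => Real.exp_pos _
  -- r → 0
  have hr0 : Tendsto r atTop (nhds 0) := by
    have h1 : Tendsto (fun n : ℕ => (n : ℝ) * (Kd * m / (2 * ε) ^ d)) atTop atTop :=
      Tendsto.atTop_mul_const (by positivity) tendsto_natCast_atTop_atTop
    have h2 : Tendsto u atTop atTop := by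
      have h3 : Tendsto (fun n : ℕ =>
          Real.log ((n : ℝ) * Kd * m / (2 * ε) ^ d)) atTop atTop :=
        (Real.tendsto_log_atTop.comp h1).congr fun n =>
          congrArg Real.log (by ring)
      have h4 := tendsto_atTop_add_const_left atTop (y / d)
        (h3.const_mul_atTop (by positivity : (0:ℝ) < 1 / d))
      exact h4.congr fun n => (hu n).symm
    exact Real.tendsto_exp_atBot.comp (tendsto_neg_atTop_atBot.comp h2)
  -- key algebra
  have hkey : ∀ n : ℕ, 1 ≤ n → (n : ℝ) * (((2 * ε) ^ d)⁻¹ * (r n ^ d * Kd))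
      = Real.exp (-y) / m := by
    intro n hn
    have hn0 : (0 : ℝ) < n := by exact_mod_cast hn
    have hT : (0 : ℝ) < (n : ℝ) * Kd * m / (2 * ε) ^ d := by positivity
    have hrn : r n ^ d = Real.exp (-y) / ((n : ℝ) * Kd * m / (2 * ε) ^ d) := by
      have e1 : r n ^ d = Real.exp ((d : ℝ) * (-(u n))) := by
        rw [Real.exp_nat_mul]
      rw [e1, hu n]
      have e2 : (d : ℝ) * (-(y / d + 1 / d *
          Real.log ((n : ℝ) * Kd * m / (2 * ε) ^ d)))
          = -y + -(Real.log ((n : ℝ) * Kd * m / (2 * ε) ^ d)) := by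
        field_simp
        ring
      rw [e2, Real.exp_add, Real.exp_neg, Real.exp_neg, Real.exp_log hT]
      ring
    rw [hrn]
    field_simp
  -- the cube
  set cube : Set (EuclideanSpace ℝ (Fin d)) := {ω | ∀ i, |ω i| ≤ ε} with hcube
  have hθapp : ∀ S : Set (EuclideanSpace ℝ (Fin d)), MeasurableSet S →
      θε S = (ENNReal.ofReal ((2 * ε) ^ d))⁻¹ * volume (S ∩ cube) := by
    intro S hS
    rw [hθ, Measure.smul_apply, Measure.restrict_apply hS, smul_eq_mul]
  -- the sets
  set Sset : ℕ → EuclideanSpace ℝ (Fin d) → Set (EuclideanSpace ℝ (Fin d)) :=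
    fun n x => {ω | (∀ i, |ω i| ≤ ε) ∧ ‖f x + ω - z‖ < r n} with hSset
  have hSeq : ∀ n x, Sset n x = cube ∩ Metric.ball (z - f x) (r n) := by
    intro n x
    ext ω
    have : f x + ω - z = ω - (z - f x) := by abel
    simp only [hSset, hcube, Set.mem_setOf_eq, Set.mem_inter_iff, Metric.mem_ball,
      dist_eq_norm, this]
  have hcubem : MeasurableSet cube := by
    have hc : cube = ⋂ i, {ω : EuclideanSpace ℝ (Fin d) | |ω i| ≤ ε} := by
      ext ω; simp [hcube]
    rw [hc]
    exact MeasurableSet.iInter fun i =>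
      measurableSet_le ((EuclideanSpace.proj i).continuous.measurable.abs) measurable_const
  have hSmeas : ∀ n x, MeasurableSet (Sset n x) := by
    intro n x
    rw [hSeq]
    exact hcubem.inter measurableSet_ball
  have hSsub : ∀ n x, Sset n x ⊆ cube := fun n x ω h => h.1
  -- volume of balls
  have hball : ∀ (c : EuclideanSpace ℝ (Fin d)) (ρ : ℝ), 0 ≤ ρ →
      volume (Metric.ball c ρ) = ENNReal.ofReal (ρ ^ d) *
        volume (Metric.ball (0 : EuclideanSpace ℝ (Fin d)) 1) := by
    intro c ρ hρ
    rw [Measure.addHaar_ball volume c hρ]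
    simp [finrank_euclideanSpace]
  have hα0 : ENNReal.ofReal ((2 * ε) ^ d) ≠ 0 := by
    simp only [ne_eq, ENNReal.ofReal_eq_zero, not_le]; exact h2ε
  have htoReal : ∀ n : ℕ, ((ENNReal.ofReal ((2 * ε) ^ d))⁻¹ *
      (ENNReal.ofReal (r n ^ d) *
        volume (Metric.ball (0 : EuclideanSpace ℝ (Fin d)) 1))).toReal
      = ((2 * ε) ^ d)⁻¹ * (r n ^ d * Kd) := by
    intro n
    rw [ENNReal.toReal_mul, ENNReal.toReal_mul, ENNReal.toReal_inv,
      ENNReal.toReal_ofReal h2ε.le, ENNReal.toReal_ofReal (pow_nonneg (hrpos n).le d), ← hK]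
  -- the integrand and its properties
  set F : ℕ → EuclideanSpace ℝ (Fin d) → ℝ :=
    fun n x => (n : ℝ) * (θε (Sset n x)).toReal with hF
  set C : ℝ := Real.exp (-y) / m with hC
  have hC0 : 0 ≤ C := by positivity
  have hθle : ∀ n x, (θε (Sset n x)).toReal ≤ ((2 * ε) ^ d)⁻¹ * (r n ^ d * Kd) := by
    intro n x
    rw [← htoReal n]
    apply ENNReal.toReal_mono
    · exact ENNReal.mul_ne_top (ENNReal.inv_ne_top.mpr hα0)
        (ENNReal.mul_ne_top ENNReal.ofReal_ne_top hKEtop)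
    · rw [hθapp _ (hSmeas n x), ← hball (z - f x) (r n) (hrpos n).le]
      exact mul_le_mul_right (measure_mono (fun ω hω => by
        rw [hSeq] at hω; exact hω.1.2)) _
  have hFbound : ∀ n x, F n x ≤ C := by
    intro n x
    rcases Nat.eq_zero_or_pos n with hn | hn
    · simp [hF, hn, hC0]
    · calc F n x ≤ (n : ℝ) * (((2 * ε) ^ d)⁻¹ * (r n ^ d * Kd)) :=
          mul_le_mul_of_nonneg_left (hθle n x) n.cast_nonneg
        _ = C := hkey n hn
  have hFnonneg : ∀ n x, 0 ≤ F n x :=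
    fun n x => mul_nonneg n.cast_nonneg ENNReal.toReal_nonneg
  -- measurability
  have hFmeas : ∀ n, AEStronglyMeasurable (F n) με := by
    intro n
    have hW : MeasurableSet {p : EuclideanSpace ℝ (Fin d) × EuclideanSpace ℝ (Fin d) |
        (∀ i, |p.2 i| ≤ ε) ∧ ‖f p.1 + p.2 - z‖ < r n} := by
      have e : {p : EuclideanSpace ℝ (Fin d) × EuclideanSpace ℝ (Fin d) |
          (∀ i, |p.2 i| ≤ ε) ∧ ‖f p.1 + p.2 - z‖ < r n}
          = (⋂ i, {p : EuclideanSpace ℝ (Fin d) × EuclideanSpace ℝ (Fin d) | |p.2 i| ≤ ε})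
            ∩ {p | ‖f p.1 + p.2 - z‖ < r n} := by
        ext p; simp [Set.mem_iInter]
      rw [e]
      exact (MeasurableSet.iInter fun i => measurableSet_le
          (((EuclideanSpace.proj i).continuous.measurable.comp measurable_snd).abs)
          measurable_const).inter
        (measurableSet_lt
          ((((hf.comp measurable_fst).add measurable_snd).sub measurable_const).norm)
          measurable_const)
    have h1 : Measurable fun x => θε (Sset n x) := by
      have h2 : ∀ x, θε (Sset n x) = (ENNReal.ofReal ((2 * ε) ^ d))⁻¹ *
          volume (Prod.mk x ⁻¹' {p : EuclideanSpace ℝ (Fin d) × EuclideanSpace ℝ (Fin d) |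
            (∀ i, |p.2 i| ≤ ε) ∧ ‖f p.1 + p.2 - z‖ < r n}) := by
        intro x
        rw [hθapp _ (hSmeas n x), Set.inter_eq_self_of_subset_left (hSsub n x)]
        rfl
      simp only [h2]
      exact (measurable_measure_prodMk_left hW).const_mul _
    exact (h1.ennreal_toReal.const_mul _).aestronglyMeasurable
  -- limit function
  have hAmeas : MeasurableSet A := by
    rw [hA]
    apply measurableSet_lt _ measurable_const
    apply Measurable.norm
    exact measurable_pi_lambda _ fun i =>
      ((EuclideanSpace.proj i).continuous.measurable.comp hf).sub measurable_const
  set L : EuclideanSpace ℝ (Fin d) → ℝ := A.indicator fun _ => C with hL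
  -- a.e. convergence
  have hae : ∀ᵐ x ∂με, s x ≠ ε := by
    rw [ae_iff]
    simpa using hnull
  have hlim : ∀ᵐ x ∂με, Tendsto (fun n => F n x) atTop (nhds (L x)) := by
    filter_upwards [hae] with x hx
    rcases lt_or_gt_of_ne hx with hlt | hgt
    · -- inside the hypercube
      have hxA : x ∈ A := hlt
      have hev : ∀ᶠ n in atTop, F n x = C := by
        filter_upwards [hr0.eventually_lt_const
          (by linarith : (0:ℝ) < ε - s x), eventually_ge_atTop 1] with n h1 h2
        have hsub : Metric.ball (z - f x) (r n) ⊆ cube := by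
          intro ω hω i
          have h3 : |ω i - (z - f x) i| ≤ ‖ω - (z - f x)‖ := by
            simpa using coord_abs_le_norm (ω - (z - f x)) i
          have h4 : |(z - f x) i| ≤ s x := by
            have h5 := norm_le_pi_norm (fun j => f x j - z j : Fin d → ℝ) i
            rw [Real.norm_eq_abs] at h5
            have h6 : (z - f x) i = -(f x i - z i) := by
              simp [PiLp.sub_apply]
            rw [h6, abs_neg]
            exact h5
          have h7 : ‖ω - (z - f x)‖ < r n := by
            rw [← dist_eq_norm]; exact hω
          have h8 : |ω i| < ε := by
            calc |ω i| = |(ω i - (z - f x) i) + (z - f x) i| := by ring_nf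
              _ ≤ |ω i - (z - f x) i| + |(z - f x) i| := abs_add_le _ _
              _ < r n + s x := by linarith [lt_of_le_of_lt h3 h7]
              _ ≤ ε := by linarith
          exact h8.le
        have heq : Sset n x ∩ cube = Metric.ball (z - f x) (r n) := by
          rw [Set.inter_eq_self_of_subset_left (hSsub n x), hSeq]
          exact Set.inter_eq_self_of_subset_right hsub
        have : (θε (Sset n x)).toReal = ((2 * ε) ^ d)⁻¹ * (r n ^ d * Kd) := by
          rw [hθapp _ (hSmeas n x), heq, hball (z - f x) (r n) (hrpos n).le, htoReal n]
        rw [hF]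
        dsimp only
        rw [this]
        exact hkey n h2
      rw [hL, Set.indicator_of_mem hxA]
      exact Tendsto.congr' (EventuallyEq.symm hev) tendsto_const_nhds
    · -- outside the hypercube
      have hxA : x ∉ A := by
        rw [hA]; simp only [Set.mem_setOf_eq, not_lt]; linarith
      obtain ⟨i, hi⟩ : ∃ i, ε < |f x i - z i| := by
        by_contra h
        push_neg at h
        have h5 : s x ≤ ε :=
          (pi_norm_le_iff_of_nonneg hε.le).mpr fun i => by
            rw [Real.norm_eq_abs]; exact h i
        linarith
      have hev : ∀ᶠ n in atTop, F n x = 0 := by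
        filter_upwards [hr0.eventually_lt_const
          (by linarith : (0:ℝ) < |f x i - z i| - ε)] with n h1
        have hempty : Sset n x = ∅ := by
          ext ω
          simp only [hSset, Set.mem_setOf_eq, Set.mem_empty_iff_false, iff_false, not_and,
            not_lt]
          intro hωc
          by_contra h2
          push_neg at h2
          have h3 : |ω i - (z - f x) i| ≤ ‖ω - (z - f x)‖ := by
            simpa using coord_abs_le_norm (ω - (z - f x)) i
          have h4 : ‖ω - (z - f x)‖ < r n := by
            have : f x + ω - z = ω - (z - f x) := by abel
            rw [← this]; exact h2
          have h6 : |(z - f x) i| = |f x i - z i| := by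
            have h7 : (z - f x) i = -(f x i - z i) := by
              simp [PiLp.sub_apply]
            rw [h7, abs_neg]
          have h8 : |(z - f x) i| ≤ |(z - f x) i - ω i| + |ω i| := by
            calc |(z - f x) i| = |((z - f x) i - ω i) + ω i| := by ring_nf
              _ ≤ |(z - f x) i - ω i| + |ω i| := abs_add_le _ _
          rw [abs_sub_comm] at h3
          have := hωc i
          linarith
        rw [hF]
        dsimp only
        rw [hempty]
        simp
      rw [hL, Set.indicator_of_notMem hxA]
      exact Tendsto.congr' (EventuallyEq.symm hev) tendsto_const_nhds
  -- dominated convergence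
  have hdct := tendsto_integral_of_dominated_convergence (μ := με) (F := F) (f := L)
    (fun _ => C) hFmeas (integrable_const C)
    (fun n => Filter.Eventually.of_forall fun x => by
      rw [Real.norm_eq_abs, abs_of_nonneg (hFnonneg n x)]; exact hFbound n x)
    hlim
  have hLint : ∫ x, L x ∂με = Real.exp (-y) := by
    rw [hL, integral_indicator_const _ hAmeas, measureReal_def, ← hm, smul_eq_mul, hC]
    field_simp
  rw [hLint] at hdct
  refine hdct.congr fun n => ?_
  rw [hF]
  dsimp only
  rw [integral_const_mul]
end

section
/- Fix α ∈ (0,1) and ε ∈ (0,1), and let h_ε and μ_ε be as defined in the context. Then (a) ∫_0^1 h_ε dm = 1, so μ_ε is a probability measure; and (b) μ_ε is stationary for the randomly applied stochastic perturbation of S(x) = αx: for every bounded Borel measurable φ : [0,1] → ℝ, ∫_0^1 [ (1−ε)·φ(αx) + ε·∫_0^1 φ dm ] dμ_ε(x) = ∫_0^1 φ dμ_ε. -/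
open MeasureTheory Filter Set
open scoped ENNReal

namespace CRS

variable {α ε : ℝ}

noncomputable def c (α ε : ℝ) (n : ℕ) : ℝ := ε * ∑ k ∈ Finset.range (n+1), ((1-ε)/α)^k

def I (α : ℝ) (n : ℕ) : Set ℝ := Set.Ioc (α^(n+1)) (α^n)

noncomputable def H (α ε : ℝ) : ℝ → ℝ :=
  fun x => ∑' n, (I α n).indicator (fun _ => c α ε n) x

lemma I_subset (hα : α ∈ Set.Ioo (0:ℝ) 1) (n : ℕ) : I α n ⊆ Set.Ioc 0 1 := by
  intro x hx
  exact ⟨lt_of_lt_of_le (pow_pos hα.1 _) hx.1.le,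
    hx.2.trans (pow_le_one₀ hα.1.le hα.2.le)⟩

lemma I_union (hα : α ∈ Set.Ioo (0:ℝ) 1) : Set.Ioc (0:ℝ) 1 = ⋃ n, I α n := by
  ext x
  simp only [Set.mem_iUnion]
  constructor
  · rintro ⟨hx0, hx1⟩
    have hex : ∃ n, α ^ n < x := exists_pow_lt_of_lt_one hx0 hα.2
    classical
    have hN : α ^ (Nat.find hex) < x := Nat.find_spec hex
    have hN1 : Nat.find hex ≠ 0 := by
      intro h0
      rw [h0, pow_zero] at hN; linarith
    refine ⟨Nat.find hex - 1, ?_, ?_⟩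
    · have : Nat.find hex - 1 + 1 = Nat.find hex := Nat.succ_pred_eq_of_pos (Nat.pos_of_ne_zero hN1)
      rw [this]; exact hN
    · exact le_of_not_gt (Nat.find_min hex (Nat.pred_lt hN1))
  · rintro ⟨n, hn⟩
    exact I_subset hα n hn

lemma I_disjoint (hα : α ∈ Set.Ioo (0:ℝ) 1) : Pairwise (Function.onFun Disjoint (I α)) := by
  have key : ∀ m n : ℕ, m < n → Disjoint (I α m) (I α n) := by
    intro m n hmn
    rw [I, I, Set.Ioc_disjoint_Ioc]
    have h1 : α ^ n ≤ α ^ (m+1) := pow_le_pow_of_le_one hα.1.le hα.2.le hmn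
    have h2 : α ^ n ≤ α ^ m := pow_le_pow_of_le_one hα.1.le hα.2.le hmn.le
    rw [min_eq_right h2]
    exact h1.trans (le_max_left _ _)
  intro m n hmn
  rcases lt_or_gt_of_ne hmn with h | h
  · exact key m n h
  · exact (key n m h).symm

lemma H_eq_on (hα : α ∈ Set.Ioo (0:ℝ) 1) {n : ℕ} {x : ℝ} (hx : x ∈ I α n) :
    H α ε x = c α ε n := by
  have : ∀ m : ℕ, m ≠ n → (I α m).indicator (fun _ => c α ε m) x = 0 := by
    intro m hm
    apply Set.indicator_of_notMem
    exact fun hxm => (I_disjoint hα hm).ne_of_mem hxm hx rfl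
  rw [H, tsum_eq_single n this, Set.indicator_of_mem hx]

lemma H_eq_zero (hα : α ∈ Set.Ioo (0:ℝ) 1) {x : ℝ} (hx : x ∉ Set.Ioc (0:ℝ) 1) :
    H α ε x = 0 := by
  have : ∀ m : ℕ, (I α m).indicator (fun _ => c α ε m) x = 0 := by
    intro m
    exact Set.indicator_of_notMem (fun hxm => hx (I_subset hα m hxm)) _
  simp [H, this]


lemma c_nonneg (hα : α ∈ Set.Ioo (0:ℝ) 1) (hε : ε ∈ Set.Ioo (0:ℝ) 1) (n : ℕ) :
    0 ≤ c α ε n := by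
  apply mul_nonneg hε.1.le
  apply Finset.sum_nonneg
  intro k _
  exact pow_nonneg (div_nonneg (by linarith [hε.2]) hα.1.le) k

lemma hasSum_H (hα : α ∈ Set.Ioo (0:ℝ) 1) (x : ℝ) :
    HasSum (fun n => (I α n).indicator (fun _ => c α ε n) x) (H α ε x) := by
  classical
  have hsum : Summable (fun n => (I α n).indicator (fun _ => c α ε n) x) := by
    by_cases hx : x ∈ Set.Ioc (0:ℝ) 1
    · rw [I_union hα] at hx
      obtain ⟨n₀, hn₀⟩ := Set.mem_iUnion.1 hx
      apply summable_of_ne_finset_zero (s := {n₀})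
      intro m hm
      simp only [Finset.mem_singleton] at hm
      exact Set.indicator_of_notMem
        (fun hxm => (I_disjoint hα hm).ne_of_mem hxm hn₀ rfl) _
    · apply summable_of_ne_finset_zero (s := ∅)
      intro m _
      exact Set.indicator_of_notMem (fun hxm => hx (I_subset hα m hxm)) _
  exact hsum.hasSum

lemma H_meas (hα : α ∈ Set.Ioo (0:ℝ) 1) : Measurable (H α ε) := by
  apply measurable_of_tendsto_metrizable
    (f := fun N x => ∑ n ∈ Finset.range N, (I α n).indicator (fun _ => c α ε n) x)
    (fun N => Finset.measurable_sum (Finset.range N)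
      (fun i _ => (measurable_const.indicator measurableSet_Ioc)))
  rw [tendsto_pi_nhds]
  exact fun x => (hasSum_H hα x).tendsto_sum_nat

lemma H_nonneg (hα : α ∈ Set.Ioo (0:ℝ) 1) (hε : ε ∈ Set.Ioo (0:ℝ) 1) (x : ℝ) :
    0 ≤ H α ε x := by
  by_cases hx : x ∈ Set.Ioc (0:ℝ) 1
  · rw [I_union hα] at hx
    obtain ⟨n₀, hn₀⟩ := Set.mem_iUnion.1 hx
    rw [H_eq_on hα hn₀]
    exact c_nonneg hα hε n₀
  · rw [H_eq_zero hα hx]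

open Finset in
lemma hasSum_a (hα : α ∈ Set.Ioo (0:ℝ) 1) (hε : ε ∈ Set.Ioo (0:ℝ) 1) :
    HasSum (fun n => c α ε n * (α^n - α^(n+1))) 1 := by
  unfold c
  have hε1 : (0:ℝ) ≤ 1 - ε := by linarith [hε.2]
  have hεlt : 1 - ε < 1 := by linarith [hε.1]
  have hf : Summable fun k : ℕ => ‖(1-ε)^k‖ := by
    simpa [abs_of_nonneg (pow_nonneg hε1 _)] using summable_geometric_of_lt_one hε1 hεlt
  have hg : Summable fun k : ℕ => ‖α^k‖ := by
    simpa [abs_of_nonneg (pow_nonneg hα.1.le _)] using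
      summable_geometric_of_lt_one hα.1.le hα.2
  have hsum : Summable fun n : ℕ => ∑ kl ∈ Finset.HasAntidiagonal.antidiagonal n, (1-ε)^kl.1 * α^kl.2 :=
    (summable_norm_sum_mul_antidiagonal_of_summable_norm hf hg).of_norm
  have htsum : (∑' k : ℕ, (1-ε)^k) * (∑' k : ℕ, α^k) =
      ∑' n, ∑ kl ∈ Finset.HasAntidiagonal.antidiagonal n, (1-ε)^kl.1 * α^kl.2 :=
    tsum_mul_tsum_eq_tsum_sum_antidiagonal_of_summable_norm hf hg
  rw [tsum_geometric_of_lt_one hε1 hεlt, tsum_geometric_of_lt_one hα.1.le hα.2] at htsum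
  -- so ∑' n, A n = (1-(1-ε))⁻¹ * (1-α)⁻¹ = ε⁻¹ (1-α)⁻¹
  have hA : HasSum (fun n => ∑ kl ∈ Finset.HasAntidiagonal.antidiagonal n, (1-ε)^kl.1 * α^kl.2)
      ((1-(1-ε))⁻¹ * (1-α)⁻¹) := htsum ▸ hsum.hasSum
  have key := hA.mul_left (ε * (1-α))
  have hne : ε * (1-α) * ((1-(1-ε))⁻¹ * (1-α)⁻¹) = 1 := by
    have h1 : (1:ℝ) - (1-ε) = ε := by ring
    have h2 : ε * (1-α) ≠ 0 :=
      (mul_pos hε.1 (by linarith [hα.2] : (0:ℝ) < 1-α)).ne'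
    rw [h1, ← mul_inv]
    exact mul_inv_cancel₀ h2
  rw [hne] at key
  convert key using 1
  · rfl
  funext n
  have hterm : ∀ k ∈ Finset.range (n+1),
      ε * ((1-ε)/α)^k * (α^n - α^(n+1)) = ε*(1-α) * ((1-ε)^k * α^(n-k)) := by
    intro k hk
    have hk' : k ≤ n := Nat.lt_succ_iff.1 (Finset.mem_range.1 hk)
    have hsplit : α ^ n = α ^ k * α ^ (n - k) := by
      rw [← pow_add, Nat.add_sub_cancel' hk']
    have hαk : ((1-ε)/α)^k * α^n = (1-ε)^k * α^(n-k) := by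
      rw [hsplit, div_pow]
      field_simp
      rw [mul_assoc ((1-ε)^k), mul_div_assoc, mul_div_cancel_left₀ _ (pow_ne_zero k (ne_of_gt hα.1))]
    calc ε * ((1-ε)/α)^k * (α^n - α^(n+1))
        = (ε * (1-α)) * (((1-ε)/α)^k * α^n) := by ring
      _ = ε * (1-α) * ((1-ε)^k * α^(n-k)) := by rw [hαk]
  calc (ε * ∑ k ∈ Finset.range (n+1), ((1-ε)/α)^k) * (α^n - α^(n+1))
      = ∑ k ∈ Finset.range (n+1), ε * ((1-ε)/α)^k * (α^n - α^(n+1)) := by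
        rw [Finset.mul_sum, Finset.sum_mul]
    _ = ∑ k ∈ Finset.range (n+1), ε*(1-α) * ((1-ε)^k * α^(n-k)) :=
        Finset.sum_congr rfl hterm
    _ = ε*(1-α) * ∑ k ∈ Finset.range (n+1), ((1-ε)^k * α^(n-k)) :=
        (Finset.mul_sum _ _ _).symm
    _ = ε*(1-α) * ∑ kl ∈ Finset.HasAntidiagonal.antidiagonal n, (1-ε)^kl.1 * α^kl.2 := by
        rw [Finset.Nat.sum_antidiagonal_eq_sum_range_succ (fun i j => (1-ε)^i * α^j)]


lemma len_nonneg (hα : α ∈ Set.Ioo (0:ℝ) 1) (n : ℕ) : 0 ≤ α^n - α^(n+1) :=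
  sub_nonneg.2 (pow_le_pow_of_le_one hα.1.le hα.2.le (Nat.le_succ n))

lemma a_nonneg (hα : α ∈ Set.Ioo (0:ℝ) 1) (hε : ε ∈ Set.Ioo (0:ℝ) 1) (n : ℕ) :
    0 ≤ c α ε n * (α^n - α^(n+1)) :=
  mul_nonneg (c_nonneg hα hε n) (len_nonneg hα n)

lemma integrableOn_H (hα : α ∈ Set.Ioo (0:ℝ) 1) (hε : ε ∈ Set.Ioo (0:ℝ) 1) :
    IntegrableOn (H α ε) (Set.Ioc 0 1) volume := by
  constructor
  · exact (H_meas hα).aestronglyMeasurable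
  · rw [hasFiniteIntegral_iff_ofReal (ae_of_all _ (H_nonneg hα hε))]
    rw [show Set.Ioc (0:ℝ) 1 = ⋃ n, I α n from I_union hα,
      lintegral_iUnion (s := I α) (fun n => measurableSet_Ioc) (I_disjoint hα)]
    have heq : ∀ n : ℕ, ∫⁻ x in I α n, ENNReal.ofReal (H α ε x) =
        ENNReal.ofReal (c α ε n * (α^n - α^(n+1))) := by
      intro n
      have hms : MeasurableSet (I α n) := measurableSet_Ioc
      have h1 : ∫⁻ x in I α n, ENNReal.ofReal (H α ε x) =
          ∫⁻ x in I α n, ENNReal.ofReal (c α ε n) :=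
        setLIntegral_congr_fun hms
          (fun x hx => by rw [H_eq_on hα hx])
      have hvol : volume (I α n) = ENNReal.ofReal (α^n - α^(n+1)) := Real.volume_Ioc
      rw [h1, setLIntegral_const, hvol, ← ENNReal.ofReal_mul (c_nonneg hα hε n)]
    simp_rw [heq]
    rw [← ENNReal.ofReal_tsum_of_nonneg (a_nonneg hα hε) (hasSum_a hα hε).summable]
    exact ENNReal.ofReal_lt_top

lemma integrableOn_Hg (hα : α ∈ Set.Ioo (0:ℝ) 1) (hε : ε ∈ Set.Ioo (0:ℝ) 1)
    {g : ℝ → ℝ} (hg : Measurable g) {C : ℝ} (hC : ∀ x, |g x| ≤ C) :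
    IntegrableOn (fun x => H α ε x * g x) (Set.Ioc 0 1) volume := by
  apply Integrable.mono' ((integrableOn_H hα hε).const_mul C)
    ((H_meas hα).mul hg).aestronglyMeasurable
  apply ae_of_all
  intro x
  rw [Pi.mul_apply, norm_mul, Real.norm_eq_abs, Real.norm_eq_abs,
    abs_of_nonneg (H_nonneg hα hε x), mul_comm C _]
  exact mul_le_mul_of_nonneg_left (hC x) (H_nonneg hα hε x)

lemma hasSum_Hg (hα : α ∈ Set.Ioo (0:ℝ) 1) (hε : ε ∈ Set.Ioo (0:ℝ) 1)
    {g : ℝ → ℝ} (hg : Measurable g) {C : ℝ} (hC : ∀ x, |g x| ≤ C) :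
    HasSum (fun n => c α ε n * ∫ x in I α n, g x)
      (∫ x in Set.Ioc (0:ℝ) 1, H α ε x * g x) := by
  have hfi := integrableOn_Hg hα hε hg hC
  rw [show Set.Ioc (0:ℝ) 1 = ⋃ n, I α n from I_union hα] at hfi ⊢
  have := hasSum_integral_iUnion (μ := volume) (s := I α) (fun _ => measurableSet_Ioc)
    (I_disjoint hα) hfi
  convert this using 1
  · rfl
  funext n
  have hms : MeasurableSet (I α n) := measurableSet_Ioc
  have h1 : (∫ x in I α n, H α ε x * g x) = ∫ x in I α n, c α ε n * g x :=
    setIntegral_congr_fun hms (fun x hx => by simp only [H_eq_on hα hx])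
  rw [h1, integral_const_mul]

end CRS

open CRS in
/-- For the randomly applied stochastic perturbation of
`S(x) = αx`, the measure `μ_ε` with density
`h_ε(x) = ε ∑_{k<p} ((1-ε)/α)^k` on `(α^p, α^{p-1}]` is a stationary
probability measure: `∫ h_ε dm = 1` and
`∫ U_ε φ dμ_ε = ∫ φ dμ_ε` for every bounded Borel `φ`, where
`U_ε φ(x) = (1-ε) φ(αx) + ε ∫_0^1 φ dm`. -/
theorem contracting_reset_stationary_measure
    (α ε : ℝ) (hα : α ∈ Set.Ioo (0 : ℝ) 1) (hε : ε ∈ Set.Ioo (0 : ℝ) 1)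
    (h : ℝ → ℝ)
    (hh : ∀ p : ℕ, 1 ≤ p → ∀ x ∈ Set.Ioc (α ^ p) (α ^ (p - 1)),
      h x = ε * ∑ k ∈ Finset.range p, ((1 - ε) / α) ^ k) :
    (∫ x in Set.Icc (0 : ℝ) 1, h x) = 1 ∧
    IsProbabilityMeasure
      (((volume : Measure ℝ).restrict (Set.Icc 0 1)).withDensity
        (fun x => ENNReal.ofReal (h x))) ∧
    ∀ φ : ℝ → ℝ, Measurable φ → (∃ C : ℝ, ∀ x, |φ x| ≤ C) →
      (∫ x, ((1 - ε) * φ (α * x) + ε * ∫ y in Set.Icc (0 : ℝ) 1, φ y)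
          ∂(((volume : Measure ℝ).restrict (Set.Icc 0 1)).withDensity
            (fun x => ENNReal.ofReal (h x)))) =
        ∫ x, φ x
          ∂(((volume : Measure ℝ).restrict (Set.Icc 0 1)).withDensity
            (fun x => ENNReal.ofReal (h x))) := by
  classical
  have hres : (volume : Measure ℝ).restrict (Set.Icc 0 1)
      = (volume : Measure ℝ).restrict (Set.Ioc 0 1) :=
    (Measure.restrict_congr_set Ioc_ae_eq_Icc).symm
  have hhH : ∀ x ∈ Set.Ioc (0:ℝ) 1, h x = H α ε x := by
    intro x hx
    rw [I_union hα] at hx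
    obtain ⟨n, hn⟩ := Set.mem_iUnion.1 hx
    rw [H_eq_on hα hn]
    exact hh (n+1) (by omega) x hn
  have hμ : ((volume : Measure ℝ).restrict (Set.Icc 0 1)).withDensity
        (fun x => ENNReal.ofReal (h x))
      = ((volume : Measure ℝ).restrict (Set.Ioc 0 1)).withDensity
        (fun x => ENNReal.ofReal (H α ε x)) := by
    rw [hres]
    exact withDensity_congr_ae (ae_restrict_of_forall_mem measurableSet_Ioc
      (fun x hx => by dsimp only; rw [hhH x hx]))
  -- the total integral of H over (0,1] is 1
  have hIone : ∀ n : ℕ, (∫ _ in I α n, (1:ℝ)) = α^n - α^(n+1) := by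
    intro n
    have hvol : volume (I α n) = ENNReal.ofReal (α^n - α^(n+1)) := Real.volume_Ioc
    rw [setIntegral_const, measureReal_def, hvol, ENNReal.toReal_ofReal (len_nonneg hα n), smul_eq_mul, mul_one]
  have hintH : (∫ x in Set.Ioc (0:ℝ) 1, H α ε x) = 1 := by
    have h1 := hasSum_Hg hα hε (g := fun _ => (1:ℝ)) measurable_const (C := 1)
      (fun x => by norm_num)
    simp_rw [hIone] at h1
    have h2 : (∫ x in Set.Ioc (0:ℝ) 1, H α ε x * 1) = ∫ x in Set.Ioc (0:ℝ) 1, H α ε x := by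
      simp
    rw [← h2]
    exact h1.unique (hasSum_a hα hε)
  have hinth : (∫ x in Set.Icc (0:ℝ) 1, h x) = 1 := by
    rw [integral_Icc_eq_integral_Ioc,
      integral_congr_ae (ae_restrict_of_forall_mem measurableSet_Ioc
        (fun x hx => hhH x hx))]
    exact hintH
  refine ⟨hinth, ⟨?_⟩, ?_⟩
  · rw [hμ, withDensity_apply _ MeasurableSet.univ, Measure.restrict_univ,
      ← ofReal_integral_eq_lintegral_ofReal (integrableOn_H hα hε)
        (ae_of_all _ (H_nonneg hα hε)), hintH, ENNReal.ofReal_one]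
  · intro φ hφ hbd
    obtain ⟨C, hC⟩ := hbd
    have hφα : Measurable (fun x => φ (α * x)) := hφ.comp (measurable_const_mul α)
    have hCα : ∀ x, |φ (α * x)| ≤ C := fun x => hC _
    have hswap : ∀ g : ℝ → ℝ,
        (∫ x, g x ∂(((volume : Measure ℝ).restrict (Set.Ioc 0 1)).withDensity
          (fun x => ENNReal.ofReal (H α ε x))))
        = ∫ x in Set.Ioc (0:ℝ) 1, H α ε x * g x := by
      intro g
      rw [show (fun x => ENNReal.ofReal (H α ε x))
          = (fun x => ((H α ε x).toNNReal : ℝ≥0∞)) from rfl]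
      rw [integral_withDensity_eq_integral_smul (Measurable.real_toNNReal (H_meas hα)) g]
      apply integral_congr_ae
      apply ae_of_all
      intro x
      simp [NNReal.smul_def, Real.coe_toNNReal _ (H_nonneg hα hε x)]
    rw [hμ, hswap, hswap]
    set K := ∫ y in Set.Icc (0:ℝ) 1, φ y with hKdef
    -- split the left integral
    have hsplit : (∫ x in Set.Ioc (0:ℝ) 1, H α ε x * ((1 - ε) * φ (α * x) + ε * K))
        = (1-ε) * (∫ x in Set.Ioc (0:ℝ) 1, H α ε x * φ (α * x)) + ε * K := by
      have heq : (fun x => H α ε x * ((1 - ε) * φ (α * x) + ε * K))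
          = fun x => (1-ε) * (H α ε x * φ (α * x)) + (ε*K) * H α ε x := by
        funext x; ring
      rw [heq, integral_add ((integrableOn_Hg hα hε hφα hCα).const_mul (1-ε))
        ((integrableOn_H hα hε).const_mul (ε*K)), integral_const_mul, integral_const_mul,
        hintH, mul_one]
    rw [hsplit]
    -- HasSum identities
    have hS2 : HasSum (fun n => c α ε n * ∫ x in I α n, φ x)
        (∫ x in Set.Ioc (0:ℝ) 1, H α ε x * φ x) := hasSum_Hg hα hε hφ hC
    have hS1 : HasSum (fun n => c α ε n * ∫ x in I α n, φ (α * x))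
        (∫ x in Set.Ioc (0:ℝ) 1, H α ε x * φ (α * x)) := hasSum_Hg hα hε hφα hCα
    have hφint : IntegrableOn φ (Set.Ioc (0:ℝ) 1) volume := by
      apply Integrable.mono' (g := fun _ => C)
        (integrableOn_const measure_Ioc_lt_top.ne)
        hφ.aestronglyMeasurable
      exact ae_of_all _ fun x => by simpa using hC x
    have hS3 : HasSum (fun n => ∫ x in I α n, φ x) (∫ x in Set.Ioc (0:ℝ) 1, φ x) := by
      rw [show Set.Ioc (0:ℝ) 1 = ⋃ n, I α n from I_union hα] at hφint ⊢
      exact hasSum_integral_iUnion (μ := volume) (s := I α)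
        (fun _ => measurableSet_Ioc) (I_disjoint hα) hφint
    -- substitution
    have hsub : ∀ n : ℕ, (∫ x in I α n, φ (α * x)) = α⁻¹ * ∫ x in I α (n+1), φ x := by
      intro n
      have hle1 : α^(n+1) ≤ α^n := pow_le_pow_of_le_one hα.1.le hα.2.le (Nat.le_succ n)
      have hle2 : α^(n+2) ≤ α^(n+1) := pow_le_pow_of_le_one hα.1.le hα.2.le (Nat.le_succ _)
      have e1 : (∫ x in I α n, φ (α * x)) = ∫ x in (α^(n+1))..(α^n), φ (α * x) :=
        (intervalIntegral.integral_of_le hle1).symm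
      have e2 : (∫ x in I α (n+1), φ x) = ∫ x in (α^(n+2))..(α^(n+1)), φ x :=
        (intervalIntegral.integral_of_le hle2).symm
      rw [e1, e2, intervalIntegral.integral_comp_mul_left _ (ne_of_gt hα.1)]
      have c1 : α * α^(n+1) = α^(n+2) := (pow_succ' α (n+1)).symm
      have c2 : α * α^n = α^(n+1) := (pow_succ' α n).symm
      rw [c1, c2, smul_eq_mul]
    -- recursion for c
    have hcrec : ∀ n : ℕ, c α ε (n+1) = ((1-ε)/α) * c α ε n + ε := by
      intro n
      rw [CRS.c, CRS.c, geom_sum_succ]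
      ring
    have hc0 : c α ε 0 = ε := by simp [CRS.c]
    -- assemble
    set J : ℕ → ℝ := fun n => ∫ x in I α n, φ x with hJ
    have hS1' : HasSum (fun n => ((1-ε)/α * c α ε n) * J (n+1))
        ((1-ε) * ∫ x in Set.Ioc (0:ℝ) 1, H α ε x * φ (α * x)) := by
      have := hS1.mul_left (1-ε)
      simp_rw [hsub] at this
      convert this using 2 with n
      · rfl
      field_simp
      ring
    have hS3' : HasSum (fun n => ε * J (n+1))
        (ε * (∫ x in Set.Ioc (0:ℝ) 1, φ x) - ε * J 0) := by
      rw [hasSum_nat_add_iff (f := fun n => ε * J n) 1]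
      simp only [Finset.range_one, Finset.sum_singleton]
      have : ε * (∫ x in Set.Ioc (0:ℝ) 1, φ x) - ε * J 0 + ε * J 0
          = ε * ∫ x in Set.Ioc (0:ℝ) 1, φ x := by ring
      rw [this]
      exact hS3.mul_left ε
    have hadd := hS1'.add hS3'
    have hterm : (fun n => ((1-ε)/α * c α ε n) * J (n+1) + ε * J (n+1))
        = fun n => c α ε (n+1) * J (n+1) := by
      funext n
      rw [hcrec n]
      ring
    rw [hterm] at hadd
    have hshift := (hasSum_nat_add_iff (f := fun n => c α ε n * J n) 1).1 hadd
    simp only [Finset.range_one, Finset.sum_singleton, hc0] at hshift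
    have hfinal := hshift.unique hS2
    -- hfinal : LHS-ish = ∫ H φ
    rw [← hfinal]
    have hKIoc : K = ∫ x in Set.Ioc (0:ℝ) 1, φ x := integral_Icc_eq_integral_Ioc
    rw [hKIoc]
    ring
end

section
/- Fix α ∈ (0,1) and ε ∈ (0,1), let U_ε be the Koopman operator defined in the context, and let μ be any Borel probability measure on [0,1] that is stationary, i.e. ∫ U_ε φ dμ = ∫ φ dμ for all bounded Borel measurable φ. Then for every bounded Borel measurable φ : [0,1] → ℝ, every μ-integrable ψ : [0,1] → ℝ, and every n ∈ ℕ: | ∫ (U_ε)^n φ · ψ dμ − (∫ φ dμ)·(∫ ψ dμ) | ≤ 2·(1−ε)^n·‖φ‖_∞·∫ |ψ| dμ. (This is the exponential decay of correlations used to verify condition D₂.) -/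
open MeasureTheory Filter Set
open scoped ENNReal

/-- The Koopman operator `U_ε φ(x) = (1-ε) φ(αx) + ε ∫_0^1 φ dm` of the
randomly applied stochastic perturbation of `S(x) = αx`. -/
noncomputable def koopmanReset (α ε : ℝ) (φ : ℝ → ℝ) : ℝ → ℝ :=
  fun x => (1 - ε) * φ (α * x) + ε * ∫ y in Set.Icc (0 : ℝ) 1, φ y

/-- Exponential decay of correlations for the randomly
applied stochastic perturbation of `S(x) = αx`: for any stationary Borel
probability measure `μ` on `[0,1]`, any bounded Borel `φ`, any `μ`-integrable
`ψ` and any `n`,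
`|∫ (U_ε)^n φ · ψ dμ - (∫ φ dμ)(∫ ψ dμ)| ≤ 2 (1-ε)^n ‖φ‖_∞ ∫|ψ| dμ`. -/
theorem koopmanReset_decay_of_correlations (α ε : ℝ)
    (hα : α ∈ Set.Ioo (0 : ℝ) 1) (hε : ε ∈ Set.Ioo (0 : ℝ) 1)
    (μ : Measure ℝ) [IsProbabilityMeasure μ] (hμ : μ (Set.Icc (0 : ℝ) 1)ᶜ = 0)
    (hstat : ∀ φ : ℝ → ℝ, Measurable φ → (∃ C : ℝ, ∀ x, |φ x| ≤ C) →
      ∫ x, koopmanReset α ε φ x ∂μ = ∫ x, φ x ∂μ) :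
    ∀ φ : ℝ → ℝ, Measurable φ → (∃ C : ℝ, ∀ x, |φ x| ≤ C) →
    ∀ ψ : ℝ → ℝ, Integrable ψ μ →
    ∀ n : ℕ,
      |(∫ x, ((koopmanReset α ε)^[n] φ x) * ψ x ∂μ) -
          (∫ x, φ x ∂μ) * ∫ x, ψ x ∂μ| ≤
        2 * (1 - ε) ^ n * (⨆ x ∈ Set.Icc (0 : ℝ) 1, |φ x|) * ∫ x, |ψ x| ∂μ := by
  intro φ hφm ⟨C, hC⟩ ψ hψ n
  have hε0 : (0:ℝ) < ε := hε.1
  have hε1 : ε < 1 := hε.2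
  have h1ε : (0:ℝ) ≤ 1 - ε := by linarith
  -- the sup
  set M : ℝ := ⨆ x ∈ Set.Icc (0 : ℝ) 1, |φ x| with hM
  have hbdd : BddAbove (Set.range fun x => ⨆ _ : x ∈ Set.Icc (0:ℝ) 1, |φ x|) := by
    refine ⟨max C 0, ?_⟩
    rintro _ ⟨x, rfl⟩
    dsimp only
    by_cases hx : x ∈ Set.Icc (0:ℝ) 1
    · rw [ciSup_pos (f := fun _ => |φ x|) hx]; exact le_max_of_le_left (hC x)
    · simp [hx]
  have hMle : ∀ x ∈ Set.Icc (0:ℝ) 1, |φ x| ≤ M := by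
    intro x hx
    rw [hM]
    calc |φ x| = ⨆ _ : x ∈ Set.Icc (0:ℝ) 1, |φ x| := (ciSup_pos (f := fun _ => |φ x|) hx).symm
    _ ≤ M := le_ciSup hbdd x
  -- explicit form of the iterate
  have hform : ∀ n : ℕ, ∃ c : ℝ, ∀ x,
      (koopmanReset α ε)^[n] φ x = (1 - ε) ^ n * φ (α ^ n * x) + c := by
    intro n
    induction n with
    | zero => exact ⟨0, fun x => by simp⟩
    | succ n ih =>
      obtain ⟨c, hc⟩ := ih
      refine ⟨(1 - ε) * c + ε * ∫ y in Set.Icc (0:ℝ) 1, (koopmanReset α ε)^[n] φ y, fun x => ?_⟩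
      rw [Function.iterate_succ_apply']
      show (1 - ε) * (koopmanReset α ε)^[n] φ (α * x) + _ = _
      rw [hc (α * x)]
      have harg : α ^ n * (α * x) = α ^ (n + 1) * x := by rw [pow_succ]; ring
      rw [harg, pow_succ]
      ring
  -- measurability and boundedness of iterates
  have hiter : ∀ n : ℕ, Measurable ((koopmanReset α ε)^[n] φ) ∧
      (∃ C' : ℝ, ∀ x, |(koopmanReset α ε)^[n] φ x| ≤ C') := by
    intro n
    obtain ⟨c, hc⟩ := hform n
    constructor
    · have : ((koopmanReset α ε)^[n] φ) = fun x => (1 - ε) ^ n * φ (α ^ n * x) + c := by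
        funext x; exact hc x
      rw [this]
      exact ((hφm.comp (measurable_const_mul _)).const_mul _).add_const _
    · refine ⟨(1 - ε) ^ n * C + |c|, fun x => ?_⟩
      rw [hc x]
      calc |(1 - ε) ^ n * φ (α ^ n * x) + c| ≤ |(1 - ε) ^ n * φ (α ^ n * x)| + |c| :=
            abs_add_le _ _
        _ ≤ (1 - ε) ^ n * C + |c| := by
            rw [abs_mul, abs_of_nonneg (pow_nonneg h1ε n)]
            exact add_le_add (mul_le_mul_of_nonneg_left (hC _) (pow_nonneg h1ε n)) le_rfl
  -- stationarity of iterates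
  have hstatn : ∀ n : ℕ, ∫ x, (koopmanReset α ε)^[n] φ x ∂μ = ∫ x, φ x ∂μ := by
    intro n
    induction n with
    | zero => rfl
    | succ n ih =>
      have := hstat ((koopmanReset α ε)^[n] φ) (hiter n).1 (hiter n).2
      rw [← ih, ← this]
      simp_rw [Function.iterate_succ_apply']
  -- set up
  obtain ⟨c, hc⟩ := hform n
  set g : ℝ → ℝ := fun x => φ (α ^ n * x) with hg
  have hgm : Measurable g := hφm.comp (measurable_const_mul _)
  have hgb : ∀ x, |g x| ≤ C := fun x => hC _
  have hgint : Integrable g μ := by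
    have := Integrable.bdd_mul (integrable_const (1:ℝ)) hgm.aestronglyMeasurable
      (c := C) (ae_of_all _ fun x => by simpa using hgb x) (μ := μ)
    simpa using this
  set A : ℝ := ∫ x, g x ∂μ with hA
  -- a.e. membership in [0,1]
  have haemem : ∀ᵐ x ∂μ, x ∈ Set.Icc (0:ℝ) 1 := by
    rw [ae_iff]
    exact hμ
  have hgM : ∀ᵐ x ∂μ, |g x| ≤ M := by
    filter_upwards [haemem] with x hx
    refine hMle _ ⟨?_, ?_⟩
    · exact mul_nonneg (pow_nonneg hα.1.le n) hx.1
    · calc α ^ n * x ≤ 1 * 1 := by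
            apply mul_le_mul (pow_le_one₀ hα.1.le hα.2.le) hx.2 hx.1 zero_le_one
      _ = 1 := by ring
  have hM0 : 0 ≤ M := le_trans (abs_nonneg _) (hMle 0 (by norm_num))
  have hAM : |A| ≤ M := by
    calc |A| = ‖∫ x, g x ∂μ‖ := (Real.norm_eq_abs _).symm
      _ ≤ ∫ x, ‖g x‖ ∂μ := norm_integral_le_integral_norm g (μ := μ)
      _ ≤ ∫ _x, M ∂μ := by
          refine integral_mono_ae hgint.norm (integrable_const M) ?_
          filter_upwards [hgM] with x hx
          simpa [Real.norm_eq_abs] using hx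
      _ = M := by simp
  -- integrability of products
  have hgψ : Integrable (fun x => g x * ψ x) μ :=
    Integrable.bdd_mul hψ hgm.aestronglyMeasurable (c := C) (ae_of_all _ fun x => hgb x)
  have hgAψ : Integrable (fun x => (g x - A) * ψ x) μ :=
    Integrable.bdd_mul hψ (hgm.sub measurable_const).aestronglyMeasurable
      (c := C + |A|) (ae_of_all _ fun x => by
        calc ‖g x - A‖ ≤ |g x| + |A| := abs_sub _ _
          _ ≤ C + |A| := by gcongr; exact hgb x)
  -- key identity
  have key : (∫ x, ((koopmanReset α ε)^[n] φ x) * ψ x ∂μ) -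
      (∫ x, φ x ∂μ) * ∫ x, ψ x ∂μ =
      (1 - ε) ^ n * ∫ x, (g x - A) * ψ x ∂μ := by
    have h1 : (∫ x, ((koopmanReset α ε)^[n] φ x) * ψ x ∂μ) =
        (1 - ε) ^ n * (∫ x, g x * ψ x ∂μ) + c * ∫ x, ψ x ∂μ := by
      have : (fun x => ((koopmanReset α ε)^[n] φ x) * ψ x) =
          fun x => (1 - ε) ^ n * (g x * ψ x) + c * ψ x := by
        funext x; rw [hc x]; ring
      rw [this, integral_add (hgψ.const_mul _) (hψ.const_mul _),
        integral_const_mul, integral_const_mul]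
    have h2 : ∫ x, φ x ∂μ = (1 - ε) ^ n * A + c := by
      rw [← hstatn n]
      have : (fun x => (koopmanReset α ε)^[n] φ x) =
          fun x => (1 - ε) ^ n * g x + c := by funext x; exact hc x
      rw [this, integral_add (hgint.const_mul _) (integrable_const c),
        integral_const_mul, integral_const]
      simp [hA]
    have h3 : ∫ x, (g x - A) * ψ x ∂μ =
        (∫ x, g x * ψ x ∂μ) - A * ∫ x, ψ x ∂μ := by
      have : (fun x => (g x - A) * ψ x) = fun x => g x * ψ x - A * ψ x := by
        funext x; ring
      rw [this, integral_sub hgψ (hψ.const_mul _), integral_const_mul]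
    rw [h1, h2, h3]; ring
  rw [key]
  -- final bound
  rw [abs_mul, abs_of_nonneg (pow_nonneg h1ε n)]
  have hb : |∫ x, (g x - A) * ψ x ∂μ| ≤ 2 * M * ∫ x, |ψ x| ∂μ := by
    calc |∫ x, (g x - A) * ψ x ∂μ| = ‖∫ x, (g x - A) * ψ x ∂μ‖ := (Real.norm_eq_abs _).symm
      _ ≤ ∫ x, ‖(g x - A) * ψ x‖ ∂μ :=
          norm_integral_le_integral_norm (fun x => (g x - A) * ψ x) (μ := μ)
      _ ≤ ∫ x, 2 * M * |ψ x| ∂μ := by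
          refine integral_mono_ae hgAψ.norm ((hψ.abs.const_mul _)) ?_
          filter_upwards [hgM] with x hx
          rw [Real.norm_eq_abs, abs_mul]
          have h1 : |g x - A| ≤ 2 * M := by
            calc |g x - A| ≤ |g x| + |A| := abs_sub _ _
              _ ≤ M + M := add_le_add hx hAM
              _ = 2 * M := by ring
          exact mul_le_mul_of_nonneg_right h1 (abs_nonneg _)
      _ = 2 * M * ∫ x, |ψ x| ∂μ := integral_const_mul _ _
  calc (1 - ε) ^ n * |∫ x, (g x - A) * ψ x ∂μ| ≤ (1 - ε) ^ n * (2 * M * ∫ x, |ψ x| ∂μ) :=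
        mul_le_mul_of_nonneg_left hb (pow_nonneg h1ε n)
    _ = 2 * (1 - ε) ^ n * M * ∫ x, |ψ x| ∂μ := by ring
end

section
/- Fix α ∈ (0,1), ε ∈ (0,1), an integer p ≥ 1 and z ∈ (α^p, α^{p−1}); let μ_ε, the random orbits f^n_ω̄, the probability ℙ = μ_ε × θ_ε^ℕ and the process X_n be as defined in the context, and set B_p = ε·∑_{k=0}^{p−1} ((1−ε)/α)^k, τ > 0, u_n = −log τ + log(2·n·B_p). Then condition D′(u_n) holds: there exists a sequence of positive integers (k_n) with k_n → ∞ and k_n/n → 0 such that lim_{n→∞} n·∑_{j=1}^{⌊n/k_n⌋} ℙ( X_0 > u_n and X_j > u_n ) = 0. -/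
open MeasureTheory Filter Set
open scoped ENNReal

/-- One step of the randomly applied stochastic perturbation of `S(x) = αx`:
for `ω = (η, ξ) ∈ {0,1} × [0,1]`, `f_ω(x) = η αx + (1-η) ξ` (here `η` is a
Boolean, `true` encoding `η = 1`). -/
def resetStep (α : ℝ) (ω : Bool × ℝ) (x : ℝ) : ℝ :=
  if ω.1 then α * x else ω.2

/-- Random orbit `f^n_ω̄(x) = f_{ω_n} ∘ ⋯ ∘ f_{ω_1}(x)`; the sequence `ωb`
is indexed so that `ωb n` is `ω_{n+1}`. -/
def resetOrbit (α : ℝ) (ωb : ℕ → Bool × ℝ) (x : ℝ) : ℕ → ℝ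
  | 0 => x
  | n + 1 => resetStep α (ωb n) (resetOrbit α ωb x n)

/-- The noise distribution `θ_ε` on `Ω = {0,1} × [0,1]`: product of the
Bernoulli measure giving mass `ε` to `0` and `1-ε` to `1` with Lebesgue
measure on `[0,1]`. -/
noncomputable def resetNoise (ε : ℝ) : Measure (Bool × ℝ) :=
  ((ENNReal.ofReal ε) • Measure.dirac false +
    (ENNReal.ofReal (1 - ε)) • Measure.dirac true).prod
      ((volume : Measure ℝ).restrict (Set.Icc 0 1))



lemma orbit_all_true (α : ℝ) (ωb : ℕ → Bool × ℝ) (x : ℝ) (j : ℕ)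
    (h : ∀ i < j, (ωb i).1 = true) : resetOrbit α ωb x j = α ^ j * x := by
  induction j with
  | zero => simp [resetOrbit]
  | succ n ih =>
    rw [resetOrbit, resetStep, if_pos (h n (by omega)), ih (fun i hi => h i (by omega)),
      pow_succ]
    ring

lemma orbit_last_reset (α : ℝ) (ωb : ℕ → Bool × ℝ) (x : ℝ) (m : ℕ) :
    ∀ j, m < j → (ωb m).1 = false → (∀ i, m < i → i < j → (ωb i).1 = true) →
    resetOrbit α ωb x j = α ^ (j - 1 - m) * (ωb m).2 := by
  intro j
  induction j with
  | zero => omega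
  | succ n ih =>
    intro hm hf ht
    rcases Nat.lt_or_ge m n with hmn | hmn
    · rw [resetOrbit, resetStep, if_pos (ht n hmn (by omega)),
        ih hmn hf (fun i h1 h2 => ht i h1 (by omega))]
      have he : n + 1 - 1 - m = (n - 1 - m) + 1 := by omega
      rw [he, pow_succ]; ring
    · have hme : m = n := by omega
      subst hme
      rw [resetOrbit, resetStep, if_neg (by simp [hf])]
      simp

lemma last_reset_exists (ωb : ℕ → Bool × ℝ) (j : ℕ) :
    (∀ i < j, (ωb i).1 = true) ∨
      ∃ m < j, (ωb m).1 = false ∧ ∀ i, m < i → i < j → (ωb i).1 = true := by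
  induction j with
  | zero => left; omega
  | succ n ih =>
    cases hn : (ωb n).1 with
    | false => exact Or.inr ⟨n, by omega, hn, fun i h1 h2 => by omega⟩
    | true =>
      rcases ih with h | ⟨m, hm, hf, ht⟩
      · left
        intro i hi
        rcases Nat.lt_or_ge i n with h' | h'
        · exact h i h'
        · have : i = n := by omega
          rw [this]; exact hn
      · refine Or.inr ⟨m, by omega, hf, fun i h1 h2 => ?_⟩
        rcases Nat.lt_or_ge i n with h' | h'
        · exact ht i h1 h'
        · have : i = n := by omega
          rw [this]; exact hn

lemma resetNoise_prod (ε : ℝ) (b : Bool) (A : Set ℝ) :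
    resetNoise ε ({b} ×ˢ A) =
      (if b then ENNReal.ofReal (1 - ε) else ENNReal.ofReal ε) *
        ((volume : Measure ℝ).restrict (Set.Icc 0 1)) A := by
  rw [resetNoise, Measure.prod_prod]
  congr 1
  cases b <;>
    simp [Measure.add_apply, Measure.smul_apply, Measure.dirac_apply, smul_eq_mul]

lemma resetNoise_univ (ε : ℝ) (h0 : 0 ≤ ε) (h1 : ε ≤ 1) : resetNoise ε Set.univ = 1 := by
  have : (Set.univ : Set (Bool × ℝ)) = (Set.univ : Set Bool) ×ˢ (Set.univ : Set ℝ) := by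
    ext ⟨b, x⟩; simp
  rw [resetNoise, this, Measure.prod_prod]
  simp [Measure.add_apply, Measure.smul_apply, smul_eq_mul,
    Measure.restrict_apply_univ, Real.volume_Icc]
  rw [← ENNReal.ofReal_add h0 (by linarith)]
  norm_num

set_option maxHeartbeats 1000000 in
lemma key_estimate
    (α ε : ℝ) (hα0 : 0 < α) (hα1 : α < 1) (hε0 : 0 < ε) (hε1 : ε < 1)
    (p : ℕ) (hp : 1 ≤ p) (z : ℝ) (hz1 : α ^ p < z) (hz2 : z < α ^ (p - 1))
    (h : ℝ → ℝ)
    (hh : ∀ q : ℕ, 1 ≤ q → ∀ x ∈ Set.Ioc (α ^ q) (α ^ (q - 1)),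
      h x = ε * ∑ k ∈ Finset.range q, ((1 - ε) / α) ^ k)
    (P : Measure (ℝ × (ℕ → Bool × ℝ)))
    (hP : ∀ s : Set ℝ, MeasurableSet s →
      ∀ I : Finset ℕ, ∀ t : ℕ → Set (Bool × ℝ), (∀ i, MeasurableSet (t i)) →
        P (s ×ˢ {ωb | ∀ i ∈ I, ωb i ∈ t i}) =
          ((((volume : Measure ℝ).restrict (Set.Icc 0 1)).withDensity
              (fun x => ENNReal.ofReal (h x))) s) *
            ∏ i ∈ I, resetNoise ε (t i))
    (X : ℕ → ℝ × (ℕ → Bool × ℝ) → ℝ)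
    (hX : ∀ n q, X n q = -Real.log |resetOrbit α q.2 q.1 n - z|)
    (B τ : ℝ) (hτ : 0 < τ)
    (hB : B = ε * ∑ k ∈ Finset.range p, ((1 - ε) / α) ^ k) (hB0 : 0 < B)
    (u : ℕ → ℝ) (hu : ∀ n : ℕ, u n = -Real.log τ + Real.log (2 * n * B))
    (n j : ℕ) (hn : 1 ≤ n) (hj : 1 ≤ j)
    (hδs : τ / (2 * n * B) ≤ min (z - α ^ p) (min (α ^ (p - 1) - z) (z * (1 - α) / (1 + α)))) :
    P {q | u n < X 0 q ∧ u n < X j q} ≤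
      ENNReal.ofReal ((4 * B * ε * p / α ^ (p - 1)) * (τ / (2 * n * B)) ^ 2) := by
  set δ : ℝ := τ / (2 * n * B) with hδdef
  have hnR : (0 : ℝ) < n := by exact_mod_cast hn
  have h2nB : (0 : ℝ) < 2 * n * B := mul_pos (mul_pos two_pos hnR) hB0
  have hδ0 : 0 < δ := div_pos hτ h2nB
  have hδ1 : δ ≤ z - α ^ p := hδs.trans (min_le_left _ _)
  have hδ2 : δ ≤ α ^ (p - 1) - z := hδs.trans ((min_le_right _ _).trans (min_le_left _ _))
  have hδ3 : δ ≤ z * (1 - α) / (1 + α) := hδs.trans ((min_le_right _ _).trans (min_le_right _ _))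
  have hzpos : 0 < z := lt_trans (pow_pos hα0 p) hz1
  -- translation of the threshold condition
  have hun : u n = -Real.log δ := by
    rw [hu n, hδdef, Real.log_div hτ.ne' h2nB.ne']
    ring
  have habs : ∀ y : ℝ, u n < -Real.log |y - z| → |y - z| < δ := by
    intro y hy
    rcases eq_or_lt_of_le (abs_nonneg (y - z)) with h0 | h0
    · rw [← h0]; exact hδ0
    · have hlt : Real.log |y - z| < Real.log δ := by
        rw [hun] at hy; linarith
      have := Real.exp_lt_exp.mpr hlt
      rwa [Real.exp_log h0, Real.exp_log hδ0] at this
  -- the cylinder sets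
  set s : Set ℝ := Set.Ioo (z - δ) (z + δ) with hsdef
  set A : ℕ → Set ℝ := fun r => {ξ : ℝ | |α ^ r * ξ - z| < δ} with hAdef
  set T : ℕ → ℕ → Set (Bool × ℝ) := fun m i =>
    if i = m then ({false} ×ˢ A (j - 1 - m)) else (({true} : Set Bool) ×ˢ Set.univ) with hTdef
  set Cyl : ℕ → Set (ℝ × (ℕ → Bool × ℝ)) := fun m =>
    s ×ˢ {ωb | ∀ i ∈ Finset.Icc m (j - 1), ωb i ∈ T m i} with hCyldef
  have hs_meas : MeasurableSet s := measurableSet_Ioo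
  have hA_meas : ∀ r, MeasurableSet (A r) := by
    intro r
    have hm : Measurable fun ξ : ℝ => |α ^ r * ξ - z| := by fun_prop
    exact hm measurableSet_Iio
  have hT_meas : ∀ m i, MeasurableSet (T m i) := by
    intro m i
    by_cases hi : i = m
    · simp only [hTdef]
      rw [if_pos hi]
      exact (measurableSet_singleton false).prod (hA_meas _)
    · simp only [hTdef]
      rw [if_neg hi]
      exact (measurableSet_singleton true).prod MeasurableSet.univ
  -- inclusion into the union of cylinders
  have hsub : {q : ℝ × (ℕ → Bool × ℝ) | u n < X 0 q ∧ u n < X j q} ⊆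
      ⋃ m ∈ Finset.range j, Cyl m := by
    rintro ⟨x, ωb⟩ ⟨h1, h2⟩
    rw [hX 0 (x, ωb)] at h1
    rw [hX j (x, ωb)] at h2
    have hx : |x - z| < δ := by
      have : resetOrbit α ωb x 0 = x := rfl
      exact habs x (by rwa [this] at h1)
    have hxj : |resetOrbit α ωb x j - z| < δ := habs _ h2
    have hxIoo : x ∈ s := by
      rw [hsdef]
      rcases abs_lt.mp hx with ⟨ha, hb⟩
      exact ⟨by linarith, by linarith⟩
    rcases last_reset_exists ωb j with hall | ⟨m, hm, hf, ht⟩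
    · exfalso
      rw [orbit_all_true α ωb x j hall] at hxj
      rcases abs_lt.mp hx with ⟨hxa, hxb⟩
      rcases abs_lt.mp hxj with ⟨hja, hjb⟩
      have hxpos : 0 < x := by linarith [pow_pos hα0 p]
      have hpowj : α ^ j ≤ α := by
        calc α ^ j ≤ α ^ 1 := pow_le_pow_of_le_one hα0.le hα1.le hj
        _ = α := pow_one α
      have h1' : α ^ j * x ≤ α * x := mul_le_mul_of_nonneg_right hpowj hxpos.le
      have h2' : α * x < α * (z + δ) := by nlinarith
      have h3' : α * (z + δ) ≤ z - δ := by
        have h1α : 0 < 1 + α := by linarith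
        rw [le_div_iff₀ h1α] at hδ3
        nlinarith
      linarith
    · apply Set.mem_biUnion (Finset.mem_range.mpr hm)
      refine ⟨hxIoo, ?_⟩
      intro i hi
      rw [Finset.mem_Icc] at hi
      by_cases him : i = m
      · subst him
        simp only [hTdef, if_pos rfl]
        refine ⟨by simpa using hf, ?_⟩
        rw [orbit_last_reset α ωb x i j hm hf ht] at hxj
        exact hxj
      · simp only [hTdef, if_neg him]
        refine ⟨by simpa using ht i (by omega) (by omega), Set.mem_univ _⟩
  -- bound on the density measure of s
  have hμs : (((volume : Measure ℝ).restrict (Set.Icc 0 1)).withDensity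
      (fun x => ENNReal.ofReal (h x))) s ≤ ENNReal.ofReal (B * (2 * δ)) := by
    rw [withDensity_apply _ hs_meas]
    have hcongr : ∀ x ∈ s, ENNReal.ofReal (h x) = ENNReal.ofReal B := by
      intro x hx
      rcases hx with ⟨hxa, hxb⟩
      rw [hh p hp x ⟨by linarith, by linarith⟩, ← hB]
    calc ∫⁻ x in s, ENNReal.ofReal (h x) ∂((volume : Measure ℝ).restrict (Set.Icc 0 1))
        = ∫⁻ _x in s, ENNReal.ofReal B ∂((volume : Measure ℝ).restrict (Set.Icc 0 1)) :=
          setLIntegral_congr_fun hs_meas hcongr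
      _ = ENNReal.ofReal B * ((volume : Measure ℝ).restrict (Set.Icc 0 1)) s := by
          rw [setLIntegral_const]
      _ ≤ ENNReal.ofReal B * ENNReal.ofReal (2 * δ) := by
          apply mul_le_mul_right
          rw [Measure.restrict_apply hs_meas]
          refine (measure_mono Set.inter_subset_left).trans ?_
          rw [hsdef, Real.volume_Ioo]
          exact ENNReal.ofReal_le_ofReal (le_of_eq (by ring))
      _ = ENNReal.ofReal (B * (2 * δ)) := (ENNReal.ofReal_mul hB0.le).symm
  have hTm_le_one : ∀ m i, resetNoise ε (T m i) ≤ 1 := fun m i =>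
    (measure_mono (Set.subset_univ _)).trans_eq (resetNoise_univ ε hε0.le hε1.le)
  have hαp1 : 0 < α ^ (p - 1) := pow_pos hα0 _
  -- bound on the key noise factor
  have hfactor : ∀ m, resetNoise ε (T m m) ≤
      (if j - 1 - m < p then ENNReal.ofReal ε * ENNReal.ofReal (2 * δ / α ^ (p - 1))
        else 0) := by
    intro m
    have hTmm : T m m = ({false} : Set Bool) ×ˢ A (j - 1 - m) := by
      simp [hTdef]
    rw [hTmm, resetNoise_prod]
    simp only [Bool.false_eq_true, if_false]
    set r := j - 1 - m with hrdef
    rcases Nat.lt_or_ge r p with hrp | hrp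
    · rw [if_pos hrp]
      apply mul_le_mul_right
      rw [Measure.restrict_apply (hA_meas r)]
      have hαr : 0 < α ^ r := pow_pos hα0 r
      have hsub' : A r ∩ Set.Icc 0 1 ⊆ Set.Ioo ((z - δ) / α ^ r) ((z + δ) / α ^ r) := by
        rintro ξ ⟨hξ, _, _⟩
        have hξ' : |α ^ r * ξ - z| < δ := hξ
        rcases abs_lt.mp hξ' with ⟨ha, hb⟩
        constructor
        · rw [div_lt_iff₀ hαr]; nlinarith
        · rw [lt_div_iff₀ hαr]; nlinarith
      refine (measure_mono hsub').trans ?_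
      rw [Real.volume_Ioo]
      apply ENNReal.ofReal_le_ofReal
      have heq : (z + δ) / α ^ r - (z - δ) / α ^ r = 2 * δ / α ^ r := by
        field_simp
        ring
      rw [heq]
      have hαle : α ^ (p - 1) ≤ α ^ r := pow_le_pow_of_le_one hα0.le hα1.le (by omega)
      gcongr
    · rw [if_neg (by omega)]
      have hempty : A r ∩ Set.Icc 0 1 = ∅ := by
        apply Set.eq_empty_iff_forall_notMem.mpr
        rintro ξ ⟨hξ, h0, h1⟩
        have hξ' : |α ^ r * ξ - z| < δ := hξ
        rcases abs_lt.mp hξ' with ⟨ha, _⟩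
        have hξ0 : (0:ℝ) ≤ ξ := h0
        have hξ1 : ξ ≤ 1 := h1
        have hαr1 : α ^ r ≤ α ^ p := pow_le_pow_of_le_one hα0.le hα1.le hrp
        have hle : α ^ r * ξ ≤ α ^ r := by nlinarith [pow_pos hα0 r]
        linarith
      rw [Measure.restrict_apply (hA_meas r), hempty]
      simp
  -- bound on each cylinder measure
  set D : ℝ≥0∞ := ENNReal.ofReal (B * (2 * δ)) *
    (ENNReal.ofReal ε * ENNReal.ofReal (2 * δ / α ^ (p - 1))) with hDdef
  have hCyl_le : ∀ m ∈ Finset.range j, P (Cyl m) ≤ if j - 1 - m < p then D else 0 := by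
    intro m hm
    rw [Finset.mem_range] at hm
    have hPC : P (Cyl m) = (((volume : Measure ℝ).restrict (Set.Icc 0 1)).withDensity
        (fun x => ENNReal.ofReal (h x))) s *
        ∏ i ∈ Finset.Icc m (j - 1), resetNoise ε (T m i) := by
      rw [hCyldef]
      exact hP s hs_meas (Finset.Icc m (j - 1)) (T m) (hT_meas m)
    have hmI : m ∈ Finset.Icc m (j - 1) := Finset.mem_Icc.mpr ⟨le_refl m, by omega⟩
    have hprod : ∏ i ∈ Finset.Icc m (j - 1), resetNoise ε (T m i) ≤ resetNoise ε (T m m) := by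
      rw [← Finset.mul_prod_erase _ _ hmI]
      calc resetNoise ε (T m m) * ∏ i ∈ (Finset.Icc m (j - 1)).erase m, resetNoise ε (T m i)
          ≤ resetNoise ε (T m m) * 1 :=
            mul_le_mul_right (Finset.prod_le_one (fun _ _ => zero_le)
              (fun i _ => hTm_le_one m i)) _
        _ = resetNoise ε (T m m) := mul_one _
    rcases Nat.lt_or_ge (j - 1 - m) p with hrp | hrp
    · rw [if_pos hrp]
      rw [hPC, hDdef]
      refine mul_le_mul' hμs (hprod.trans ?_)
      have := hfactor m
      rwa [if_pos hrp] at this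
    · rw [if_neg (by omega)]
      rw [hPC]
      have h0 : resetNoise ε (T m m) ≤ 0 := by
        have := hfactor m
        rwa [if_neg (by omega)] at this
      have : ∏ i ∈ Finset.Icc m (j - 1), resetNoise ε (T m i) = 0 :=
        le_antisymm (hprod.trans h0) zero_le
      rw [this, mul_zero]
  -- sum up
  have hsum : P {q : ℝ × (ℕ → Bool × ℝ) | u n < X 0 q ∧ u n < X j q} ≤
      (p : ℝ≥0∞) * D := by
    calc P {q : ℝ × (ℕ → Bool × ℝ) | u n < X 0 q ∧ u n < X j q}
        ≤ P (⋃ m ∈ Finset.range j, Cyl m) := measure_mono hsub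
      _ ≤ ∑ m ∈ Finset.range j, P (Cyl m) := measure_biUnion_finset_le _ _
      _ ≤ ∑ m ∈ Finset.range j, (if j - 1 - m < p then D else 0) :=
          Finset.sum_le_sum hCyl_le
      _ = ∑ m ∈ (Finset.range j).filter (fun m => j - 1 - m < p), D := by
          rw [Finset.sum_filter]
      _ = ((Finset.range j).filter (fun m => j - 1 - m < p)).card • D :=
          Finset.sum_const D
      _ ≤ (p : ℝ≥0∞) * D := by
          rw [nsmul_eq_mul]
          apply mul_le_mul_left
          have hcard : ((Finset.range j).filter (fun m => j - 1 - m < p)).card ≤ p := by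
            have hsub2 : (Finset.range j).filter (fun m => j - 1 - m < p) ⊆
                Finset.Ico (j - p) j := by
              intro m hm
              rw [Finset.mem_filter, Finset.mem_range] at hm
              rw [Finset.mem_Ico]
              omega
            calc ((Finset.range j).filter (fun m => j - 1 - m < p)).card
                ≤ (Finset.Ico (j - p) j).card := Finset.card_le_card hsub2
              _ = j - (j - p) := Nat.card_Ico _ _
              _ ≤ p := by omega
          exact_mod_cast Nat.cast_le.mpr hcard
  refine hsum.trans ?_
  have hDval : (p : ℝ≥0∞) * D =
      ENNReal.ofReal ((p : ℝ) * (B * (2 * δ) * (ε * (2 * δ / α ^ (p - 1))))) := by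
    rw [hDdef, ← ENNReal.ofReal_mul hε0.le, ← ENNReal.ofReal_mul (by positivity : (0:ℝ) ≤ B * (2 * δ)),
      ← ENNReal.ofReal_natCast p, ← ENNReal.ofReal_mul (by positivity : (0:ℝ) ≤ (p : ℝ))]
  rw [hDval]
  apply ENNReal.ofReal_le_ofReal
  apply le_of_eq
  field_simp
  ring

set_option maxHeartbeats 1000000 in
/-- Condition `D'(u_n)` for the process
`X_n(x,ω̄) = -log|f^n_ω̄(x) - z|` under `ℙ = μ_ε × θ_ε^ℕ` (`ℙ` is characterized
by its values on measurable cylinders), with `z ∈ (α^p, α^{p-1})` and levels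
`u_n = -log τ + log(2 n B_p)`. -/
theorem contracting_reset_condition_Dprime
    (α ε : ℝ) (hα : α ∈ Set.Ioo (0 : ℝ) 1) (hε : ε ∈ Set.Ioo (0 : ℝ) 1)
    (p : ℕ) (hp : 1 ≤ p) (z : ℝ) (hz : z ∈ Set.Ioo (α ^ p) (α ^ (p - 1)))
    (h : ℝ → ℝ)
    (hh : ∀ q : ℕ, 1 ≤ q → ∀ x ∈ Set.Ioc (α ^ q) (α ^ (q - 1)),
      h x = ε * ∑ k ∈ Finset.range q, ((1 - ε) / α) ^ k)
    (P : Measure (ℝ × (ℕ → Bool × ℝ))) [IsProbabilityMeasure P]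
    (hP : ∀ s : Set ℝ, MeasurableSet s →
      ∀ I : Finset ℕ, ∀ t : ℕ → Set (Bool × ℝ), (∀ i, MeasurableSet (t i)) →
        P (s ×ˢ {ωb | ∀ i ∈ I, ωb i ∈ t i}) =
          ((((volume : Measure ℝ).restrict (Set.Icc 0 1)).withDensity
              (fun x => ENNReal.ofReal (h x))) s) *
            ∏ i ∈ I, resetNoise ε (t i))
    (X : ℕ → ℝ × (ℕ → Bool × ℝ) → ℝ)
    (hX : ∀ n q, X n q = -Real.log |resetOrbit α q.2 q.1 n - z|)
    (B τ : ℝ) (hτ : 0 < τ)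
    (hB : B = ε * ∑ k ∈ Finset.range p, ((1 - ε) / α) ^ k)
    (u : ℕ → ℝ) (hu : ∀ n : ℕ, u n = -Real.log τ + Real.log (2 * n * B)) :
    ∃ k : ℕ → ℕ,
      Tendsto k atTop atTop ∧
      Tendsto (fun n : ℕ => (k n : ℝ) / n) atTop (nhds 0) ∧
      Tendsto
        (fun n : ℕ => (n : ℝ) *
          ∑ j ∈ Finset.Icc 1 (n / k n),
            (P {q | u n < X 0 q ∧ u n < X j q}).toReal)
        atTop (nhds 0) := by
  obtain ⟨hα0, hα1⟩ := hα
  obtain ⟨hε0, hε1⟩ := hε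
  obtain ⟨hz1, hz2⟩ := hz
  have hB0 : 0 < B := by
    rw [hB]
    apply mul_pos hε0
    apply Finset.sum_pos
    · intro k _
      exact pow_pos (div_pos (by linarith) hα0) k
    · exact ⟨0, Finset.mem_range.mpr (by omega)⟩
  have hsqrt : Tendsto (fun n : ℕ => Nat.sqrt n) atTop atTop :=
    tendsto_atTop_atTop.mpr (fun b => ⟨b * b, fun n hn => Nat.le_sqrt.mpr hn⟩)
  have hsqR : Tendsto (fun n : ℕ => (Nat.sqrt n : ℝ)) atTop atTop :=
    tendsto_natCast_atTop_atTop.comp hsqrt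
  refine ⟨fun n => Nat.sqrt n, hsqrt, ?_, ?_⟩
  · -- sqrt n / n → 0
    apply squeeze_zero' (g := fun n : ℕ => 1 / (Nat.sqrt n : ℝ))
    · filter_upwards [eventually_ge_atTop 1] with n hn
      positivity
    · filter_upwards [eventually_ge_atTop 1] with n hn
      have hsp : 0 < Nat.sqrt n := Nat.sqrt_pos.mpr (by omega)
      have hspR : (0 : ℝ) < (Nat.sqrt n : ℝ) := by exact_mod_cast hsp
      have hnR : (0 : ℝ) < (n : ℝ) := by exact_mod_cast Nat.lt_of_lt_of_le Nat.zero_lt_one hn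
      rw [div_le_div_iff₀ hnR hspR]
      have := Nat.sqrt_le' n
      have : ((Nat.sqrt n : ℝ)) * (Nat.sqrt n : ℝ) ≤ (n : ℝ) := by
        have h2 : Nat.sqrt n * Nat.sqrt n ≤ n := by nlinarith [Nat.sqrt_le' n, sq (Nat.sqrt n)]
        exact_mod_cast h2
      linarith
    · exact Tendsto.div_atTop tendsto_const_nhds hsqR
  · -- the main limit
    set mm : ℝ := min (z - α ^ p) (min (α ^ (p - 1) - z) (z * (1 - α) / (1 + α))) with hmmdef
    have hzpos : 0 < z := lt_trans (pow_pos hα0 p) hz1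
    have hmm0 : 0 < mm := by
      apply lt_min (by linarith)
      apply lt_min (by linarith)
      apply div_pos (mul_pos hzpos (by linarith)) (by linarith)
    have hden : Tendsto (fun n : ℕ => 2 * (n : ℝ) * B) atTop atTop :=
      (tendsto_natCast_atTop_atTop.const_mul_atTop two_pos).atTop_mul_const hB0
    have hδ0' : Tendsto (fun n : ℕ => τ / (2 * (n : ℝ) * B)) atTop (nhds 0) :=
      Tendsto.div_atTop tendsto_const_nhds hden
    have hev : ∀ᶠ n : ℕ in atTop, τ / (2 * (n : ℝ) * B) ≤ mm :=
      (hδ0'.eventually_lt_const hmm0).mono (fun n hn => hn.le)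
    set C : ℝ := 4 * B * ε * p / α ^ (p - 1) with hCdef
    have hC0 : 0 < C := by
      apply div_pos _ (pow_pos hα0 _)
      have hpR : (0 : ℝ) < (p : ℝ) := by exact_mod_cast hp
      exact mul_pos (mul_pos (mul_pos (by norm_num : (0:ℝ) < 4) hB0) hε0) hpR
    set C' : ℝ := C * (τ ^ 2 / (4 * B ^ 2)) with hC'def
    apply squeeze_zero' (g := fun n : ℕ => C' / (Nat.sqrt n : ℝ))
    · filter_upwards with n
      apply mul_nonneg (Nat.cast_nonneg n)
      exact Finset.sum_nonneg (fun j _ => ENNReal.toReal_nonneg)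
    · filter_upwards [eventually_ge_atTop 1, hev] with n hn1 hδn
      have hnR : (0 : ℝ) < (n : ℝ) := by exact_mod_cast hn1
      set δ : ℝ := τ / (2 * (n : ℝ) * B) with hδdef
      have hδpos : 0 < δ := div_pos hτ (mul_pos (mul_pos two_pos hnR) hB0)
      have hterm : ∀ j ∈ Finset.Icc 1 (n / Nat.sqrt n),
          (P {q | u n < X 0 q ∧ u n < X j q}).toReal ≤ C * δ ^ 2 := by
        intro j hj
        rw [Finset.mem_Icc] at hj
        have hkey := key_estimate α ε hα0 hα1 hε0 hε1 p hp z hz1 hz2 h hh P hP X hX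
          B τ hτ hB hB0 u hu n j hn1 hj.1 hδn
        have ht := ENNReal.toReal_mono ENNReal.ofReal_ne_top hkey
        rwa [ENNReal.toReal_ofReal (by positivity)] at ht
      have hCδ0 : 0 ≤ C * δ ^ 2 := by positivity
      set M : ℕ := n / Nat.sqrt n with hMdef
      have hsp : 0 < Nat.sqrt n := Nat.sqrt_pos.mpr (by omega)
      have hspR : (0 : ℝ) < (Nat.sqrt n : ℝ) := by exact_mod_cast hsp
      have hM : (M : ℝ) ≤ (n : ℝ) / (Nat.sqrt n : ℝ) := Nat.cast_div_le
      calc (n : ℝ) * ∑ j ∈ Finset.Icc 1 M, (P {q | u n < X 0 q ∧ u n < X j q}).toReal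
          ≤ (n : ℝ) * ((M : ℝ) * (C * δ ^ 2)) := by
            apply mul_le_mul_of_nonneg_left _ (Nat.cast_nonneg n)
            calc ∑ j ∈ Finset.Icc 1 M, (P {q | u n < X 0 q ∧ u n < X j q}).toReal
                ≤ (Finset.Icc 1 M).card • (C * δ ^ 2) :=
                  Finset.sum_le_card_nsmul _ _ _ hterm
              _ = (M : ℝ) * (C * δ ^ 2) := by
                  rw [Nat.card_Icc, nsmul_eq_mul]
                  norm_num
        _ ≤ (n : ℝ) * (((n : ℝ) / (Nat.sqrt n : ℝ)) * (C * δ ^ 2)) := by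
            apply mul_le_mul_of_nonneg_left
              (mul_le_mul_of_nonneg_right hM hCδ0) (Nat.cast_nonneg n)
        _ = C' / (Nat.sqrt n : ℝ) := by
            rw [hC'def, hδdef]
            field_simp
            ring
    · exact Tendsto.div_atTop tendsto_const_nhds hsqR
end

section
/- Fix α ∈ (0,1), ε ∈ (0,1) and z ∈ [0,1]; let μ_ε, the random orbits f^n_ω̄, the probability ℙ = μ_ε × θ_ε^ℕ and the process X_n be as defined in the context. Then condition D₂ holds with γ(n,t) = 2·(1−ε)^t·ℙ(X_0 > u): for every u ∈ ℝ, every t ≥ 1 and every ℓ ≥ 1, | ℙ( {X_0 > u} ∩ {max{X_t, …, X_{t+ℓ−1}} ≤ u} ) − ℙ(X_0 > u)·ℙ( max{X_0, …, X_{ℓ−1}} ≤ u ) | ≤ 2·(1−ε)^t·ℙ(X_0 > u). -/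
open MeasureTheory Filter Set
open scoped ENNReal

namespace D2Aux

lemma noise_true (ε : ℝ) : resetNoise ε {ω : Bool × ℝ | ω.1 = true} = ENNReal.ofReal (1 - ε) := by
  have : {ω : Bool × ℝ | ω.1 = true} = ({true} : Set Bool) ×ˢ (univ : Set ℝ) := by
    ext ⟨b, x⟩; simp
  rw [this, resetNoise, Measure.prod_prod]
  simp [Real.volume_Icc]

lemma noise_false (ε : ℝ) (s : Set ℝ) :
    resetNoise ε (({false} : Set Bool) ×ˢ s) =
      ENNReal.ofReal ε * (volume : Measure ℝ).restrict (Set.Icc 0 1) s := by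
  rw [resetNoise, Measure.prod_prod]
  simp

lemma measurable_orbit (α : ℝ) (n : ℕ) :
    Measurable (fun q : ℝ × (ℕ → Bool × ℝ) => resetOrbit α q.2 q.1 n) := by
  induction n with
  | zero => exact measurable_fst
  | succ n ih =>
      have hc : MeasurableSet {q : ℝ × (ℕ → Bool × ℝ) | (q.2 n).1 = true} := by
        exact (measurable_fst.comp ((measurable_pi_apply n).comp measurable_snd))
          (measurableSet_singleton true)
      exact Measurable.ite hc (ih.const_mul α)
        (measurable_snd.comp ((measurable_pi_apply n).comp measurable_snd))

lemma measurable_orbit' (α : ℝ) (x : ℝ) (n : ℕ) :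
    Measurable (fun ωb : ℕ → Bool × ℝ => resetOrbit α ωb x n) :=
  (measurable_orbit α n).comp (measurable_const.prodMk measurable_id)

lemma resetOrbit_indep (α : ℝ) {ωb : ℕ → Bool × ℝ} {j n : ℕ} (hj : j < n)
    (hf : (ωb j).1 = false) (x x' : ℝ) :
    resetOrbit α ωb x n = resetOrbit α ωb x' n := by
  induction n with
  | zero => omega
  | succ n ih =>
      rcases Nat.lt_succ_iff_lt_or_eq.mp hj with hlt | rfl
      · simp [resetOrbit, ih hlt]
      · simp [resetOrbit, resetStep, hf]

def Tmap (α : ℝ) (q : ℝ × (ℕ → Bool × ℝ)) : ℝ × (ℕ → Bool × ℝ) :=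
  (resetStep α (q.2 0) q.1, fun n => q.2 (n + 1))

lemma measurable_Tmap (α : ℝ) : Measurable (Tmap α) := by
  apply Measurable.prod
  · have hc : MeasurableSet {q : ℝ × (ℕ → Bool × ℝ) | (q.2 0).1 = true} :=
      (measurable_fst.comp ((measurable_pi_apply 0).comp measurable_snd))
        (measurableSet_singleton true)
    exact Measurable.ite hc (measurable_fst.const_mul α)
      (measurable_snd.comp ((measurable_pi_apply 0).comp measurable_snd))
  · exact measurable_pi_lambda _ fun n => (measurable_pi_apply (n + 1)).comp measurable_snd

lemma measurable_Tmap_iter (α : ℝ) (k : ℕ) : Measurable ((Tmap α)^[k]) := by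
  induction k with
  | zero => exact measurable_id
  | succ k ih => rw [Function.iterate_succ]; exact ih.comp (measurable_Tmap α)

lemma orbit_Tmap (α : ℝ) (q : ℝ × (ℕ → Bool × ℝ)) (n : ℕ) :
    resetOrbit α (Tmap α q).2 (Tmap α q).1 n = resetOrbit α q.2 q.1 (n + 1) := by
  induction n with
  | zero => rfl
  | succ n ih => simp only [resetOrbit, ih]; rfl

lemma orbit_Tmap_iter (α : ℝ) (q : ℝ × (ℕ → Bool × ℝ)) (k n : ℕ) :
    resetOrbit α ((Tmap α)^[k] q).2 ((Tmap α)^[k] q).1 n = resetOrbit α q.2 q.1 (k + n) := by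
  induction k generalizing q n with
  | zero => simp
  | succ k ih =>
      rw [Function.iterate_succ_apply, ih (Tmap α q) n, orbit_Tmap]
      congr 1; omega

lemma cyl_measurable {I : Finset ℕ} {t : ℕ → Set (Bool × ℝ)} (ht : ∀ i, MeasurableSet (t i)) :
    MeasurableSet {ωb : ℕ → Bool × ℝ | ∀ i ∈ I, ωb i ∈ t i} :=
  MeasurableSet.pi (I.countable_toSet) (fun i _ => ht i)

lemma pi_ext {m₁ m₂ : Measure (ℕ → Bool × ℝ)} [IsFiniteMeasure m₁]
    (huniv : m₁ univ = m₂ univ)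
    (hcyl : ∀ (I : Finset ℕ) (t : ℕ → Set (Bool × ℝ)), (∀ i, MeasurableSet (t i)) →
      m₁ {ωb | ∀ i ∈ I, ωb i ∈ t i} = m₂ {ωb | ∀ i ∈ I, ωb i ∈ t i}) : m₁ = m₂ := by
  refine ext_of_generate_finite _ generateFrom_squareCylinders.symm
    (isPiSystem_squareCylinders (fun _ => MeasurableSpace.isPiSystem_measurableSet)
      (fun _ => (MeasurableSet.univ : MeasurableSet (univ : Set (Bool × ℝ))))) ?_ huniv
  rintro S ⟨I, t, htmem, rfl⟩
  have ht : ∀ i, MeasurableSet (t i) := fun i => htmem i (mem_univ i)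
  have hS : (↑I : Set ℕ).pi t = {ωb : ℕ → Bool × ℝ | ∀ i ∈ I, ωb i ∈ t i} := by
    ext ωb; simp [Set.mem_pi]
  rw [hS]; exact hcyl I t ht

lemma prod_ext {m₁ m₂ : Measure (ℝ × (ℕ → Bool × ℝ))} [IsFiniteMeasure m₁]
    (huniv : m₁ univ = m₂ univ)
    (hrect : ∀ s : Set ℝ, MeasurableSet s → ∀ (I : Finset ℕ) (t : ℕ → Set (Bool × ℝ)),
      (∀ i, MeasurableSet (t i)) →
      m₁ (s ×ˢ {ωb | ∀ i ∈ I, ωb i ∈ t i}) = m₂ (s ×ˢ {ωb | ∀ i ∈ I, ωb i ∈ t i})) :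
    m₁ = m₂ := by
  have hspan : IsCountablySpanning
      (squareCylinders fun _ : ℕ => {s : Set (Bool × ℝ) | MeasurableSet s}) := by
    refine ⟨fun _ => univ, fun n => ⟨∅, fun _ => univ, by intro i _; simp, by simp⟩,
      Set.iUnion_const _⟩
  refine ext_of_generate_finite _
    (generateFrom_eq_prod MeasurableSpace.generateFrom_measurableSet
      generateFrom_squareCylinders isCountablySpanning_measurableSet hspan).symm
    (MeasurableSpace.isPiSystem_measurableSet.prod
      (isPiSystem_squareCylinders (fun _ => MeasurableSpace.isPiSystem_measurableSet)
        (fun _ => (MeasurableSet.univ : MeasurableSet (univ : Set (Bool × ℝ)))))) ?_ huniv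
  rintro S ⟨s, hs, W, ⟨I, t, htmem, rfl⟩, rfl⟩
  have hW : (↑I : Set ℕ).pi t = {ωb : ℕ → Bool × ℝ | ∀ i ∈ I, ωb i ∈ t i} := by
    ext ωb; simp [Set.mem_pi]
  rw [hW]
  exact hrect s hs I t (fun i => htmem i (mem_univ i))

lemma indep_lemma (P : Measure (ℝ × (ℕ → Bool × ℝ))) [IsProbabilityMeasure P] (μ : Measure ℝ)
    (hfactor : ∀ s : Set ℝ, MeasurableSet s → ∀ (I : Finset ℕ) (t : ℕ → Set (Bool × ℝ)),
      (∀ i, MeasurableSet (t i)) →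
      P (s ×ˢ {ωb | ∀ i ∈ I, ωb i ∈ t i}) = μ s * P (univ ×ˢ {ωb | ∀ i ∈ I, ωb i ∈ t i}))
    (s : Set ℝ) (hs : MeasurableSet s) (W : Set (ℕ → Bool × ℝ)) (hW : MeasurableSet W) :
    P (s ×ˢ W) = μ s * P (univ ×ˢ W) := by
  have hsu : ∀ V : Set (ℕ → Bool × ℝ), (Prod.snd : ℝ × (ℕ → Bool × ℝ) → _) ⁻¹' V
      = (univ : Set ℝ) ×ˢ V := by
    intro V; ext ⟨x, ω⟩; simp
  have hsv : ∀ V : Set (ℕ → Bool × ℝ),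
      (Prod.snd : ℝ × (ℕ → Bool × ℝ) → _) ⁻¹' V ∩ (s ×ˢ (univ : Set (ℕ → Bool × ℝ)))
        = s ×ˢ V := by
    intro V; ext ⟨x, ω⟩; simp [and_comm]
  set m₁ : Measure (ℕ → Bool × ℝ) := (P.restrict (s ×ˢ univ)).map Prod.snd with hm₁
  set m₂ : Measure (ℕ → Bool × ℝ) := μ s • (P.map Prod.snd) with hm₂
  have h₁ : ∀ V : Set (ℕ → Bool × ℝ), MeasurableSet V → m₁ V = P (s ×ˢ V) := by
    intro V hV
    rw [hm₁, Measure.map_apply measurable_snd hV,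
      Measure.restrict_apply (measurable_snd hV), hsv]
  have h₂ : ∀ V : Set (ℕ → Bool × ℝ), MeasurableSet V →
      m₂ V = μ s * P (univ ×ˢ V) := by
    intro V hV
    rw [hm₂, Measure.smul_apply, Measure.map_apply measurable_snd hV, hsu, smul_eq_mul]
  have hcylu : {ωb : ℕ → Bool × ℝ | ∀ i ∈ (∅ : Finset ℕ), ωb i ∈ (univ : Set (Bool × ℝ))}
      = univ := by simp
  haveI : IsFiniteMeasure m₁ := by
    constructor
    rw [h₁ univ MeasurableSet.univ]
    exact measure_lt_top _ _
  have hext : m₁ = m₂ := by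
    refine pi_ext ?_ ?_
    · rw [h₁ univ MeasurableSet.univ, h₂ univ MeasurableSet.univ]
      have := hfactor s hs ∅ (fun _ => univ) (fun _ => MeasurableSet.univ)
      rw [hcylu] at this
      exact this
    · intro I t ht
      rw [h₁ _ (cyl_measurable ht), h₂ _ (cyl_measurable ht)]
      exact hfactor s hs I t ht
  rw [← h₁ W hW, hext, h₂ W hW]

lemma key_density (α ε : ℝ) (hα : α ∈ Set.Ioo (0:ℝ) 1) (hε : ε ∈ Set.Ioo (0:ℝ) 1)
    (h : ℝ → ℝ)
    (hh : ∀ p : ℕ, 1 ≤ p → ∀ x ∈ Set.Ioc (α ^ p) (α ^ (p - 1)),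
      h x = ε * ∑ k ∈ Finset.range p, ((1 - ε) / α) ^ k)
    {y : ℝ} (hy : y ≠ 0) :
    (Set.Icc (0:ℝ) 1).indicator (fun x => ENNReal.ofReal (h x)) y =
      ENNReal.ofReal (1 - ε) * ENNReal.ofReal α⁻¹ *
        (Set.Icc (0:ℝ) 1).indicator (fun x => ENNReal.ofReal (h x)) (α⁻¹ * y) +
      ENNReal.ofReal ε * (Set.Icc (0:ℝ) 1).indicator (fun _ => (1:ℝ≥0∞)) y := by
  obtain ⟨hα0, hα1⟩ := hα
  obtain ⟨hε0, hε1⟩ := hε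
  set r : ℝ := (1 - ε) / α with hr
  have hrnn : 0 ≤ r := div_nonneg (by linarith) hα0.le
  rcases lt_or_gt_of_ne hy with hneg | hpos
  · have h1 : y ∉ Icc (0:ℝ) 1 := by simp only [mem_Icc, not_and_or]; left; linarith
    have h2 : α⁻¹ * y ∉ Icc (0:ℝ) 1 := by
      have : α⁻¹ * y < 0 := mul_neg_of_pos_of_neg (inv_pos.mpr hα0) hneg
      simp only [mem_Icc, not_and_or]; left; linarith
    rw [Set.indicator_of_notMem h1, Set.indicator_of_notMem h2,
      Set.indicator_of_notMem h1]
    simp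
  by_cases hy2 : 1 < y
  · have h1 : y ∉ Icc (0:ℝ) 1 := by simp only [mem_Icc, not_and_or]; right; linarith
    have h3 : 1 < α⁻¹ * y := by
      rw [inv_mul_eq_div, one_lt_div hα0]; linarith
    have h2 : α⁻¹ * y ∉ Icc (0:ℝ) 1 := by
      simp only [mem_Icc, not_and_or]; right; linarith
    rw [Set.indicator_of_notMem h1, Set.indicator_of_notMem h2,
      Set.indicator_of_notMem h1]
    simp
  have hy1 : y ≤ 1 := not_lt.mp hy2
  have hyIcc : y ∈ Icc (0:ℝ) 1 := ⟨hpos.le, hy1⟩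
  by_cases hyα : α < y
  · -- α < y ≤ 1 : h y = ε
    have hhy : h y = ε * ∑ k ∈ Finset.range 1, r ^ k := by
      refine hh 1 le_rfl y ?_
      simp only [pow_one, Nat.sub_self, pow_zero]
      exact ⟨hyα, hy1⟩
    have h3 : 1 < α⁻¹ * y := by rw [inv_mul_eq_div, one_lt_div hα0]; exact hyα
    have h2 : α⁻¹ * y ∉ Icc (0:ℝ) 1 := by
      simp only [mem_Icc, not_and_or]; right; linarith
    rw [Set.indicator_of_mem hyIcc, Set.indicator_of_notMem h2,
      Set.indicator_of_mem hyIcc, hhy]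
    simp
  · -- 0 < y ≤ α
    have hyα' : y ≤ α := not_lt.mp hyα
    have hex : ∃ n, α ^ n < y := by
      obtain ⟨n, hn⟩ := exists_pow_lt_of_lt_one hpos hα1
      exact ⟨n, hn⟩
    set p := Nat.find hex with hpdef
    have hp : α ^ p < y := Nat.find_spec hex
    have hmin : ∀ m, m < p → ¬ α ^ m < y := fun m hm => Nat.find_min hex hm
    have hp2 : 2 ≤ p := by
      by_contra hc
      push_neg at hc
      interval_cases p
      · rw [pow_zero] at hp; linarith
      · rw [pow_one] at hp; linarith
    have hy_le : y ≤ α ^ (p - 1) := not_lt.mp (hmin (p - 1) (by omega))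
    clear hpdef hmin
    clear_value p
    obtain ⟨m, rfl⟩ : ∃ m, p = m + 1 := ⟨p - 1, by omega⟩
    have hm1 : 1 ≤ m := by omega
    have hps : (m + 1) - 1 = m := by omega
    rw [hps] at hy_le
    have hhy : h y = ε * ∑ k ∈ Finset.range (m + 1), r ^ k := by
      refine hh (m + 1) (by omega) y ?_
      rw [hps]; exact ⟨hp, hy_le⟩
    have hinvIoc : α⁻¹ * y ∈ Set.Ioc (α ^ m) (α ^ (m - 1)) := by
      constructor
      · rw [inv_mul_eq_div, lt_div_iff₀ hα0, ← pow_succ]; exact hp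
      · rw [inv_mul_eq_div, div_le_iff₀ hα0, ← pow_succ]
        have : m - 1 + 1 = m := by omega
        rw [this]; exact hy_le
    have hhinv : h (α⁻¹ * y) = ε * ∑ k ∈ Finset.range m, r ^ k := hh m hm1 _ hinvIoc
    have hinvIcc : α⁻¹ * y ∈ Icc (0:ℝ) 1 := by
      constructor
      · positivity
      · rw [inv_mul_eq_div, div_le_one hα0]; exact hyα'
    have hsum_nn : (0:ℝ) ≤ ∑ k ∈ Finset.range m, r ^ k :=
      Finset.sum_nonneg fun k _ => pow_nonneg hrnn k
    rw [Set.indicator_of_mem hyIcc, Set.indicator_of_mem hinvIcc,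
      Set.indicator_of_mem hyIcc, hhy, hhinv, mul_one,
      ← ENNReal.ofReal_mul (by linarith), ← ENNReal.ofReal_mul (by positivity),
      ← ENNReal.ofReal_add (by positivity) (by linarith)]
    congr 1
    rw [geom_sum_succ, hr, div_eq_mul_inv]
    ring

lemma key_measure (α ε : ℝ) (hα : α ∈ Set.Ioo (0:ℝ) 1) (hε : ε ∈ Set.Ioo (0:ℝ) 1)
    (h : ℝ → ℝ)
    (hkey : ∀ y : ℝ, y ≠ 0 →
      (Set.Icc (0:ℝ) 1).indicator (fun x => ENNReal.ofReal (h x)) y =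
        ENNReal.ofReal (1 - ε) * ENNReal.ofReal α⁻¹ *
          (Set.Icc (0:ℝ) 1).indicator (fun x => ENNReal.ofReal (h x)) (α⁻¹ * y) +
        ENNReal.ofReal ε * (Set.Icc (0:ℝ) 1).indicator (fun _ => (1:ℝ≥0∞)) y)
    (s : Set ℝ) (hs : MeasurableSet s) :
    (((volume : Measure ℝ).restrict (Set.Icc 0 1)).withDensity
        fun x => ENNReal.ofReal (h x)) s =
      ENNReal.ofReal (1 - ε) *
        ((((volume : Measure ℝ).restrict (Set.Icc 0 1)).withDensity
          fun x => ENNReal.ofReal (h x)) ((fun x => α * x) ⁻¹' s)) +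
      ENNReal.ofReal ε * ((volume : Measure ℝ).restrict (Set.Icc 0 1)) s := by
  obtain ⟨hα0, hα1⟩ := hα
  set D : ℝ → ℝ≥0∞ := (Set.Icc (0:ℝ) 1).indicator (fun x => ENNReal.ofReal (h x)) with hD
  have hμD : ((volume : Measure ℝ).restrict (Set.Icc 0 1)).withDensity
      (fun x => ENNReal.ofReal (h x)) = (volume : Measure ℝ).withDensity D :=
    (withDensity_indicator measurableSet_Icc _).symm
  have hpre : MeasurableSet ((fun x => α * x) ⁻¹' s) := (measurable_const_mul α) hs
  -- compute the preimage term
  have hG : ∀ x : ℝ, ((fun x => α * x) ⁻¹' s).indicator D x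
      = s.indicator (fun y => D (α⁻¹ * y)) (α * x) := by
    intro x
    by_cases hx : α * x ∈ s
    · rw [Set.indicator_of_mem hx, Set.indicator_of_mem (by exact hx)]
      rw [inv_mul_cancel_left₀ (ne_of_gt hα0)]
    · rw [Set.indicator_of_notMem hx, Set.indicator_of_notMem (by exact hx)]
  have hmap : Measure.map (fun x => α * x) (volume : Measure ℝ)
      = ENNReal.ofReal α⁻¹ • (volume : Measure ℝ) := by
    rw [Real.map_volume_mul_left (ne_of_gt hα0), abs_of_pos (inv_pos.mpr hα0)]
  have hpre_val : ((volume : Measure ℝ).withDensity D) ((fun x => α * x) ⁻¹' s)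
      = ENNReal.ofReal α⁻¹ * ∫⁻ y in s, D (α⁻¹ * y) ∂(volume : Measure ℝ) := by
    rw [withDensity_apply D hpre, ← lintegral_indicator hpre]
    calc ∫⁻ x, ((fun x => α * x) ⁻¹' s).indicator D x ∂(volume : Measure ℝ)
        = ∫⁻ x, s.indicator (fun y => D (α⁻¹ * y)) (α * x) ∂(volume : Measure ℝ) := by
          exact lintegral_congr hG
      _ = ∫⁻ y, s.indicator (fun y => D (α⁻¹ * y)) y
            ∂(Measure.map (fun x => α * x) (volume : Measure ℝ)) := by
          rw [show (fun x : ℝ => α * x)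
              = ⇑((Homeomorph.mulLeft₀ α (ne_of_gt hα0)).toMeasurableEquiv) by
            rw [Homeomorph.toMeasurableEquiv_coe, Homeomorph.coe_mulLeft₀]]
          rw [lintegral_map_equiv]
          simp [Homeomorph.toMeasurableEquiv_coe, Homeomorph.coe_mulLeft₀]
      _ = ENNReal.ofReal α⁻¹ * ∫⁻ y in s, D (α⁻¹ * y) ∂(volume : Measure ℝ) := by
          rw [hmap, lintegral_smul_measure, lintegral_indicator hs, smul_eq_mul]
  have hres : ((volume : Measure ℝ).restrict (Set.Icc 0 1)) s
      = ∫⁻ y in s, (Set.Icc (0:ℝ) 1).indicator (fun _ => (1:ℝ≥0∞)) y ∂(volume : Measure ℝ) := by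
    rw [show ((fun _ => (1:ℝ≥0∞)) : ℝ → ℝ≥0∞) = 1 from rfl,
      lintegral_indicator_one measurableSet_Icc, Measure.restrict_apply measurableSet_Icc,
      Measure.restrict_apply hs, Set.inter_comm]
  rw [hμD, withDensity_apply D hs, hpre_val, hres]
  have hcne : ENNReal.ofReal (1 - ε) * ENNReal.ofReal α⁻¹ ≠ ⊤ :=
    ENNReal.mul_ne_top ENNReal.ofReal_ne_top ENNReal.ofReal_ne_top
  have hgmeas : Measurable fun y : ℝ =>
      ENNReal.ofReal ε * (Set.Icc (0:ℝ) 1).indicator (fun _ => (1:ℝ≥0∞)) y :=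
    (measurable_const.indicator measurableSet_Icc).const_mul (ENNReal.ofReal ε)
  rw [← mul_assoc, ← lintegral_const_mul' _ _ hcne,
    ← lintegral_const_mul' _ _ ENNReal.ofReal_ne_top,
    ← lintegral_add_right _ hgmeas]
  refine lintegral_congr_ae (ae_restrict_of_ae ?_)
  have h0 : ∀ᵐ y : ℝ ∂(volume : Measure ℝ), y ≠ 0 := by
    refine ae_iff.mpr ?_
    simpa using measure_singleton (0:ℝ)
  filter_upwards [h0] with y hy
  exact hkey y hy


lemma stat_lemma (α ε : ℝ) (P : Measure (ℝ × (ℕ → Bool × ℝ))) [IsProbabilityMeasure P]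
    (μ : Measure ℝ) (hμuniv : μ univ = 1)
    (hP : ∀ s : Set ℝ, MeasurableSet s → ∀ (I : Finset ℕ) (t : ℕ → Set (Bool × ℝ)),
      (∀ i, MeasurableSet (t i)) →
      P (s ×ˢ {ωb | ∀ i ∈ I, ωb i ∈ t i}) = μ s * ∏ i ∈ I, resetNoise ε (t i))
    (hkey : ∀ s : Set ℝ, MeasurableSet s →
      μ s = ENNReal.ofReal (1 - ε) * μ ((fun x => α * x) ⁻¹' s) +
        ENNReal.ofReal ε * ((volume : Measure ℝ).restrict (Set.Icc 0 1)) s) :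
    Measure.map (Tmap α) P = P := by
  haveI : IsProbabilityMeasure (Measure.map (Tmap α) P) :=
    Measure.isProbabilityMeasure_map (measurable_Tmap α).aemeasurable
  refine prod_ext (by simp) ?_
  intro s hs I t ht
  classical
  have hs' : MeasurableSet ((fun x => α * x) ⁻¹' s) := (measurable_const_mul α) hs
  set t₁ : ℕ → Set (Bool × ℝ) := fun n => if n = 0 then {ω | ω.1 = true} else t (n - 1)
    with ht₁def
  set t₂ : ℕ → Set (Bool × ℝ) := fun n => if n = 0 then ({false} : Set Bool) ×ˢ s else t (n - 1)
    with ht₂def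
  have ht₁0 : t₁ 0 = {ω : Bool × ℝ | ω.1 = true} := by rw [ht₁def]; simp
  have ht₁s : ∀ i : ℕ, t₁ (i + 1) = t i := by intro i; rw [ht₁def]; simp
  have ht₂0 : t₂ 0 = ({false} : Set Bool) ×ˢ s := by rw [ht₂def]; simp
  have ht₂s : ∀ i : ℕ, t₂ (i + 1) = t i := by intro i; rw [ht₂def]; simp
  have ht₁ : ∀ i, MeasurableSet (t₁ i) := by
    intro i
    cases i with
    | zero => rw [ht₁0]; exact measurable_fst (measurableSet_singleton true)
    | succ n => rw [ht₁s]; exact ht n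
  have ht₂ : ∀ i, MeasurableSet (t₂ i) := by
    intro i
    cases i with
    | zero => rw [ht₂0]; exact (measurableSet_singleton false).prod hs
    | succ n => rw [ht₂s]; exact ht n
  set J : Finset ℕ := insert 0 (I.image (fun i => i + 1)) with hJdef
  have h0J : (0 : ℕ) ∉ I.image (fun i => i + 1) := by simp
  have hmem : ∀ (t' : ℕ → Set (Bool × ℝ)) (ωb : ℕ → Bool × ℝ),
      (∀ i ∈ J, ωb i ∈ t' i) ↔ (ωb 0 ∈ t' 0 ∧ ∀ i ∈ I, ωb (i + 1) ∈ t' (i + 1)) := by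
    intro t' ωb
    constructor
    · intro hw
      exact ⟨hw 0 (Finset.mem_insert_self _ _), fun i hi => hw (i + 1)
        (Finset.mem_insert_of_mem (Finset.mem_image_of_mem _ hi))⟩
    · rintro ⟨h0, hrest⟩ i hi
      rcases Finset.mem_insert.mp hi with rfl | hi'
      · exact h0
      · obtain ⟨j, hj, rfl⟩ := Finset.mem_image.mp hi'
        exact hrest j hj
  have hmem₁ : ∀ ωb : ℕ → Bool × ℝ,
      (∀ i ∈ J, ωb i ∈ t₁ i) ↔ ((ωb 0).1 = true ∧ ∀ i ∈ I, ωb (i + 1) ∈ t i) := by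
    intro ωb
    rw [hmem t₁ ωb, ht₁0]
    simp only [mem_setOf_eq]
    constructor
    · rintro ⟨h1, h2⟩; exact ⟨h1, fun i hi => (ht₁s i) ▸ h2 i hi⟩
    · rintro ⟨h1, h2⟩; exact ⟨h1, fun i hi => (ht₁s i).symm ▸ h2 i hi⟩
  have hmem₂ : ∀ ωb : ℕ → Bool × ℝ,
      (∀ i ∈ J, ωb i ∈ t₂ i) ↔
        (((ωb 0).1 = false ∧ (ωb 0).2 ∈ s) ∧ ∀ i ∈ I, ωb (i + 1) ∈ t i) := by
    intro ωb
    rw [hmem t₂ ωb, ht₂0]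
    constructor
    · rintro ⟨h1, h2⟩
      exact ⟨⟨by simpa using h1.1, h1.2⟩, fun i hi => (ht₂s i) ▸ h2 i hi⟩
    · rintro ⟨⟨h1a, h1b⟩, h2⟩
      exact ⟨⟨by simpa using h1a, h1b⟩, fun i hi => (ht₂s i).symm ▸ h2 i hi⟩
  have hsplit : Tmap α ⁻¹' (s ×ˢ {ωb | ∀ i ∈ I, ωb i ∈ t i}) =
      (((fun x => α * x) ⁻¹' s) ×ˢ {ωb | ∀ i ∈ J, ωb i ∈ t₁ i}) ∪
        ((univ : Set ℝ) ×ˢ {ωb | ∀ i ∈ J, ωb i ∈ t₂ i}) := by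
    ext ⟨x, ωb⟩
    simp only [mem_preimage, Tmap, mem_prod, mem_setOf_eq, mem_union, mem_univ, true_and,
      hmem₁, hmem₂]
    cases hb : (ωb 0).1
    · simp only [resetStep, hb, Bool.false_eq_true, if_false]
      tauto
    · simp only [resetStep, hb, if_true]
      tauto
  have hdisj : Disjoint ((((fun x => α * x) ⁻¹' s)) ×ˢ {ωb : ℕ → Bool × ℝ | ∀ i ∈ J, ωb i ∈ t₁ i})
      ((univ : Set ℝ) ×ˢ {ωb : ℕ → Bool × ℝ | ∀ i ∈ J, ωb i ∈ t₂ i}) := by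
    rw [Set.disjoint_left]
    intro q hq1 hq2
    have hb1 := ((hmem₁ q.2).mp hq1.2).1
    have hb2 := ((hmem₂ q.2).mp hq2.2).1.1
    rw [hb1] at hb2
    cases hb2
  have hinj : ∀ a ∈ I, ∀ b ∈ I, a + 1 = b + 1 → a = b := fun a _ b _ hab => by omega
  have hprod₁ : ∏ i ∈ J, resetNoise ε (t₁ i)
      = ENNReal.ofReal (1 - ε) * ∏ i ∈ I, resetNoise ε (t i) := by
    rw [hJdef, Finset.prod_insert h0J, ht₁0, noise_true]
    congr 1
    rw [Finset.prod_image hinj]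
    exact Finset.prod_congr rfl fun i _ => by rw [ht₁s]
  have hprod₂ : ∏ i ∈ J, resetNoise ε (t₂ i)
      = (ENNReal.ofReal ε * ((volume : Measure ℝ).restrict (Set.Icc 0 1)) s) *
          ∏ i ∈ I, resetNoise ε (t i) := by
    rw [hJdef, Finset.prod_insert h0J, ht₂0, noise_false]
    congr 1
    rw [Finset.prod_image hinj]
    exact Finset.prod_congr rfl fun i _ => by rw [ht₂s]
  rw [Measure.map_apply (measurable_Tmap α) (hs.prod (cyl_measurable ht)), hsplit,
    measure_union hdisj (MeasurableSet.univ.prod (cyl_measurable ht₂)),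
    hP _ hs' J t₁ ht₁, hP univ MeasurableSet.univ J t₂ ht₂, hμuniv, one_mul,
    hprod₁, hprod₂, hP s hs I t ht, hkey s hs]
  ring


end D2Aux

/-- Condition `D₂` with `γ(n,t) = 2 (1-ε)^t ℙ(X_0 > u)` for
the process `X_n(x,ω̄) = -log|f^n_ω̄(x) - z|` under `ℙ = μ_ε × θ_ε^ℕ` (`ℙ` is
characterized by its values on measurable cylinders). -/
theorem contracting_reset_condition_D2
    (α ε : ℝ) (hα : α ∈ Set.Ioo (0 : ℝ) 1) (hε : ε ∈ Set.Ioo (0 : ℝ) 1)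
    (z : ℝ) (hz : z ∈ Set.Icc (0 : ℝ) 1)
    (h : ℝ → ℝ)
    (hh : ∀ p : ℕ, 1 ≤ p → ∀ x ∈ Set.Ioc (α ^ p) (α ^ (p - 1)),
      h x = ε * ∑ k ∈ Finset.range p, ((1 - ε) / α) ^ k)
    (P : Measure (ℝ × (ℕ → Bool × ℝ))) [IsProbabilityMeasure P]
    (hP : ∀ s : Set ℝ, MeasurableSet s →
      ∀ I : Finset ℕ, ∀ t : ℕ → Set (Bool × ℝ), (∀ i, MeasurableSet (t i)) →
        P (s ×ˢ {ωb | ∀ i ∈ I, ωb i ∈ t i}) =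
          ((((volume : Measure ℝ).restrict (Set.Icc 0 1)).withDensity
              (fun x => ENNReal.ofReal (h x))) s) *
            ∏ i ∈ I, resetNoise ε (t i))
    (X : ℕ → ℝ × (ℕ → Bool × ℝ) → ℝ)
    (hX : ∀ n q, X n q = -Real.log |resetOrbit α q.2 q.1 n - z|) :
    ∀ u : ℝ, ∀ t : ℕ, 1 ≤ t → ∀ ℓ : ℕ, 1 ≤ ℓ →
      |(P {q | u < X 0 q ∧ ∀ i < ℓ, X (t + i) q ≤ u}).toReal -
          (P {q | u < X 0 q}).toReal * (P {q | ∀ i < ℓ, X i q ≤ u}).toReal| ≤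
        2 * (1 - ε) ^ t * (P {q | u < X 0 q}).toReal := by
  classical
  intro u t ht ℓ hℓ
  obtain ⟨hα0, hα1⟩ := hα
  obtain ⟨hε0, hε1⟩ := hε
  open D2Aux in
  set μ : Measure ℝ := ((volume : Measure ℝ).restrict (Set.Icc 0 1)).withDensity
    (fun x => ENNReal.ofReal (h x)) with hμdef
  -- basic consequences of `hP`
  have hProd : ∀ s : Set ℝ, MeasurableSet s →
      P (s ×ˢ (univ : Set (ℕ → Bool × ℝ))) = μ s := by
    intro s hs
    have h2 := hP s hs ∅ (fun _ => univ) (fun _ => MeasurableSet.univ)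
    simpa using h2
  have hμuniv : μ univ = 1 := by
    have h2 := hProd univ MeasurableSet.univ
    rw [Set.univ_prod_univ, measure_univ] at h2
    exact h2.symm
  have hPcylU : ∀ (I : Finset ℕ) (tt : ℕ → Set (Bool × ℝ)), (∀ i, MeasurableSet (tt i)) →
      P ((univ : Set ℝ) ×ˢ {ωb | ∀ i ∈ I, ωb i ∈ tt i}) = ∏ i ∈ I, resetNoise ε (tt i) := by
    intro I tt htt
    rw [hP univ MeasurableSet.univ I tt htt, hμuniv, one_mul]
  have hPmod : ∀ s : Set ℝ, MeasurableSet s →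
      ∀ (I : Finset ℕ) (tt : ℕ → Set (Bool × ℝ)), (∀ i, MeasurableSet (tt i)) →
      P (s ×ˢ {ωb | ∀ i ∈ I, ωb i ∈ tt i}) = μ s * ∏ i ∈ I, resetNoise ε (tt i) := by
    intro s hs I tt htt
    exact hP s hs I tt htt
  have hfactor : ∀ s : Set ℝ, MeasurableSet s →
      ∀ (I : Finset ℕ) (tt : ℕ → Set (Bool × ℝ)), (∀ i, MeasurableSet (tt i)) →
      P (s ×ˢ {ωb | ∀ i ∈ I, ωb i ∈ tt i}) =
        μ s * P ((univ : Set ℝ) ×ˢ {ωb | ∀ i ∈ I, ωb i ∈ tt i}) := by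
    intro s hs I tt htt
    rw [hPmod s hs I tt htt, hPcylU I tt htt]
  have hindep := D2Aux.indep_lemma P μ hfactor
  have hkeyM : ∀ s : Set ℝ, MeasurableSet s →
      μ s = ENNReal.ofReal (1 - ε) * μ ((fun x => α * x) ⁻¹' s) +
        ENNReal.ofReal ε * ((volume : Measure ℝ).restrict (Set.Icc 0 1)) s := by
    intro s hs
    rw [hμdef]
    exact D2Aux.key_measure α ε ⟨hα0, hα1⟩ ⟨hε0, hε1⟩ h
      (fun y hy => D2Aux.key_density α ε ⟨hα0, hα1⟩ ⟨hε0, hε1⟩ h hh hy) s hs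
  have hstat : Measure.map (D2Aux.Tmap α) P = P :=
    D2Aux.stat_lemma α ε P μ hμuniv hPmod hkeyM
  have hstatk : ∀ k : ℕ, Measure.map ((D2Aux.Tmap α)^[k]) P = P := by
    intro k
    induction k with
    | zero => rw [Function.iterate_zero, Measure.map_id]
    | succ k ih =>
        rw [Function.iterate_succ',
          ← Measure.map_map (D2Aux.measurable_Tmap α) (D2Aux.measurable_Tmap_iter α k), ih, hstat]
  -- measurability of the events
  have hXm : ∀ n, Measurable (X n) := by
    intro n
    have hfe : X n = fun q => -Real.log |resetOrbit α q.2 q.1 n - z| := funext (hX n)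
    rw [hfe]
    exact (Real.measurable_log.comp (((D2Aux.measurable_orbit α n).sub_const z).abs)).neg
  have hsetE : ∀ f : ℕ → ℕ, MeasurableSet {q : ℝ × (ℕ → Bool × ℝ) | ∀ i < ℓ, X (f i) q ≤ u} := by
    intro f
    have hset : {q : ℝ × (ℕ → Bool × ℝ) | ∀ i < ℓ, X (f i) q ≤ u}
        = ⋂ i, ⋂ (_ : i < ℓ), {q | X (f i) q ≤ u} := by
      ext q; simp
    rw [hset]
    exact MeasurableSet.iInter fun i => MeasurableSet.iInter fun _ =>
      measurableSet_le (hXm (f i)) measurable_const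
  set Su : Set ℝ := {x | u < -Real.log |x - z|} with hSudef
  have hSu : MeasurableSet Su :=
    measurableSet_lt measurable_const
      ((Real.measurable_log.comp ((measurable_id.sub_const z).abs)).neg)
  have hS_eq : {q : ℝ × (ℕ → Bool × ℝ) | u < X 0 q} = Su ×ˢ univ := by
    ext ⟨x, ωb⟩
    simp [hX, resetOrbit, hSudef]
  set M : Set (ℝ × (ℕ → Bool × ℝ)) := {q | ∀ i < ℓ, X (t + i) q ≤ u} with hMdef
  set E : Set (ℝ × (ℕ → Bool × ℝ)) := {q | ∀ i < ℓ, X i q ≤ u} with hEdef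
  have hM_meas : MeasurableSet M := hsetE (fun i => t + i)
  have hE_meas : MeasurableSet E := hsetE (fun i => i)
  -- stationarity: P M = P E
  have hXit : ∀ i q, X i ((D2Aux.Tmap α)^[t] q) = X (t + i) q := by
    intro i q
    rw [hX, hX, D2Aux.orbit_Tmap_iter]
  have hME : P M = P E := by
    have hMpre : M = (D2Aux.Tmap α)^[t] ⁻¹' E := by
      rw [hMdef, hEdef]
      ext q
      simp only [mem_preimage, mem_setOf_eq, hXit]
    rw [hMpre, ← Measure.map_apply (D2Aux.measurable_Tmap_iter α t) hE_meas, hstatk t]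
  -- the no-reset event
  set Rω : Set (ℕ → Bool × ℝ) :=
    {ωb | ∀ i ∈ Finset.range t, ωb i ∈ {ω : Bool × ℝ | ω.1 = true}} with hRdef
  have hRω : MeasurableSet Rω :=
    D2Aux.cyl_measurable (fun _ => measurable_fst (measurableSet_singleton true))
  have hg0 : (0:ℝ) ≤ (1 - ε) ^ t := pow_nonneg (by linarith) t
  have hPRω : P ((univ : Set ℝ) ×ˢ Rω) = ENNReal.ofReal ((1 - ε) ^ t) := by
    rw [hRdef, hPcylU (Finset.range t) (fun _ => {ω : Bool × ℝ | ω.1 = true})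
      (fun _ => measurable_fst (measurableSet_singleton true))]
    have hc : ∏ i ∈ Finset.range t, resetNoise ε {ω : Bool × ℝ | ω.1 = true}
        = ∏ _i ∈ Finset.range t, ENNReal.ofReal (1 - ε) :=
      Finset.prod_congr rfl fun i _ => D2Aux.noise_true ε
    rw [hc, Finset.prod_const, Finset.card_range, ← ENNReal.ofReal_pow (by linarith)]
  have hPSR : P (Su ×ˢ Rω) = μ Su * ENNReal.ofReal ((1 - ε) ^ t) := by
    rw [hindep Su hSu Rω hRω, hPRω]
  -- the reset event with `x`-independent tail condition
  set Wω : Set (ℕ → Bool × ℝ) := {ωb | (∃ j < t, (ωb j).1 = false) ∧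
      ∀ i < ℓ, -Real.log |resetOrbit α ωb 0 (t + i) - z| ≤ u} with hWdef
  have hWω : MeasurableSet Wω := by
    have hset : Wω = ({ωb : ℕ → Bool × ℝ | ∃ j < t, (ωb j).1 = false}) ∩
        (⋂ i, ⋂ (_ : i < ℓ),
          {ωb : ℕ → Bool × ℝ | -Real.log |resetOrbit α ωb 0 (t + i) - z| ≤ u}) := by
      rw [hWdef]; ext ωb; simp
    rw [hset]
    refine MeasurableSet.inter ?_ ?_
    · have : {ωb : ℕ → Bool × ℝ | ∃ j < t, (ωb j).1 = false}
          = ⋃ j, ⋃ (_ : j < t), {ωb : ℕ → Bool × ℝ | (ωb j).1 = false} := by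
        ext ωb; simp
      rw [this]
      exact MeasurableSet.iUnion fun j => MeasurableSet.iUnion fun _ =>
        (measurable_fst.comp (measurable_pi_apply j)) (measurableSet_singleton false)
    · exact MeasurableSet.iInter fun i => MeasurableSet.iInter fun _ =>
        measurableSet_le
          ((Real.measurable_log.comp
            (((D2Aux.measurable_orbit' α 0 (t + i))).sub_const z).abs).neg)
          measurable_const
  -- complement identity
  have hRωc : ∀ ωb : ℕ → Bool × ℝ, ωb ∈ Rωᶜ ↔ ∃ j < t, (ωb j).1 = false := by
    intro ωb
    rw [hRdef]
    simp [mem_compl_iff]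
  have hRc : ((univ : Set ℝ) ×ˢ Rω)ᶜ = (univ : Set ℝ) ×ˢ Rωᶜ := by
    ext ⟨x, ωb⟩; simp
  -- key set identity : M ∩ Rᶜ is a product set
  have hMRc : M ∩ ((univ : Set ℝ) ×ˢ Rω)ᶜ = (univ : Set ℝ) ×ˢ Wω := by
    rw [hRc]
    ext ⟨x, ωb⟩
    constructor
    · rintro ⟨hqM, -, hqRc⟩
      have hreset : ∃ j < t, (ωb j).1 = false := (hRωc ωb).mp hqRc
      refine ⟨mem_univ _, hreset, ?_⟩
      intro i hi
      have hXi := hqM i hi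
      rw [hX] at hXi
      obtain ⟨j, hj, hjf⟩ := hreset
      rwa [D2Aux.resetOrbit_indep α (lt_of_lt_of_le hj (Nat.le_add_right t i)) hjf x 0] at hXi
    · rintro ⟨-, hreset, htail⟩
      refine ⟨?_, mem_univ _, (hRωc ωb).mpr hreset⟩
      intro i hi
      have hXi := htail i hi
      rw [hX]
      obtain ⟨j, hj, hjf⟩ := hreset
      rwa [D2Aux.resetOrbit_indep α (lt_of_lt_of_le hj (Nat.le_add_right t i)) hjf x 0]
  -- decomposition of the first event
  have hSM : {q : ℝ × (ℕ → Bool × ℝ) | u < X 0 q ∧ ∀ i < ℓ, X (t + i) q ≤ u}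
      = (Su ×ˢ univ) ∩ M := by
    rw [Set.setOf_and, hS_eq, hMdef]
  have hSMRc : ((Su ×ˢ univ) ∩ M) \ ((univ : Set ℝ) ×ˢ Rω) = Su ×ˢ Wω := by
    rw [diff_eq, inter_assoc, hMRc, prod_inter_prod, inter_univ, univ_inter]
  have hsub : (((Su ×ˢ univ) ∩ M) ∩ ((univ : Set ℝ) ×ˢ Rω)) ⊆ Su ×ˢ Rω := by
    rintro ⟨x, ωb⟩ ⟨⟨⟨hq1, -⟩, -⟩, -, hq2⟩
    exact ⟨hq1, hq2⟩
  -- pass to real numbers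
  set A : ℝ := (P (((Su ×ˢ univ) ∩ M) ∩ ((univ : Set ℝ) ×ˢ Rω))).toReal with hAdef
  set b : ℝ := (μ Su).toReal with hbdef
  set m : ℝ := (P (M ∩ ((univ : Set ℝ) ×ˢ Rω))).toReal with hmdef
  set w : ℝ := (P ((univ : Set ℝ) ×ˢ Wω)).toReal with hwdef
  have hμSu_ne : μ Su ≠ ⊤ := by
    rw [← hProd Su hSu]; exact measure_ne_top P _
  have he1 : (P {q | u < X 0 q ∧ ∀ i < ℓ, X (t + i) q ≤ u}).toReal = A + b * w := by
    rw [hSM, ← measure_inter_add_diff ((Su ×ˢ univ) ∩ M) (MeasurableSet.univ.prod hRω), hSMRc,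
      hindep Su hSu Wω hWω,
      ENNReal.toReal_add (measure_ne_top P _) (ENNReal.mul_ne_top hμSu_ne (measure_ne_top P _)),
      ENNReal.toReal_mul]
  have he2 : (P {q | u < X 0 q}).toReal = b := by
    rw [hS_eq, hProd Su hSu]
  have he3 : (P E).toReal = m + w := by
    rw [← hME, ← measure_inter_add_diff M (MeasurableSet.univ.prod hRω), diff_eq, hMRc,
      ENNReal.toReal_add (measure_ne_top P _) (measure_ne_top P _)]
  have hble : A ≤ b * ((1 - ε) ^ t) := by
    have h4 : P (((Su ×ˢ univ) ∩ M) ∩ ((univ : Set ℝ) ×ˢ Rω))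
        ≤ μ Su * ENNReal.ofReal ((1 - ε) ^ t) := by
      rw [← hPSR]; exact measure_mono hsub
    have h5 := ENNReal.toReal_mono (ENNReal.mul_ne_top hμSu_ne ENNReal.ofReal_ne_top) h4
    rwa [ENNReal.toReal_mul, ENNReal.toReal_ofReal hg0] at h5
  have hmle : m ≤ (1 - ε) ^ t := by
    have h4 : P (M ∩ ((univ : Set ℝ) ×ˢ Rω)) ≤ ENNReal.ofReal ((1 - ε) ^ t) := by
      rw [← hPRω]; exact measure_mono inter_subset_right
    have h5 := ENNReal.toReal_mono ENNReal.ofReal_ne_top h4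
    rwa [ENNReal.toReal_ofReal hg0] at h5
  rw [he1, he2, he3]
  have hb0 : 0 ≤ b := ENNReal.toReal_nonneg
  have hA0 : 0 ≤ A := ENNReal.toReal_nonneg
  have hm0 : 0 ≤ m := ENNReal.toReal_nonneg
  have hw0 : 0 ≤ w := ENNReal.toReal_nonneg
  have hkey2 : A + b * w - b * (m + w) = A - b * m := by ring
  rw [hkey2]
  refine abs_le.mpr ⟨?_, ?_⟩
  · nlinarith [mul_le_mul_of_nonneg_left hmle hb0]
  · nlinarith [mul_nonneg hb0 hm0]
end
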